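/- arXiv:1701.05500 — 3 statements merged into one kernel-verified Lean document; each statement's English description precedes it below -/
import Mathlib

section
/- A graph G is a Laman graph if and only if G can be constructed from the graph consisting of two vertices joined by a single edge by a finite sequence of applications of the two Henneberg rules. -/
set_option maxHeartbeats 1000000

noncomputable section
open Classical

namespace LamanGraphs

variable {V : Type} [Fintype V]

/-- The Laman counting conditions for a (connected) simple graph:
`|E| = 2|V| - 3`, and `|E'| ≤ 2|V'| - 3` for every subgraph with at least two vertices. -/
def LamanCond (G : SimpleGraph V) : Prop :=
  G.edgeSet.ncard + 3 = 2 * Fintype.card V ∧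
  ∀ G' : G.Subgraph, 2 ≤ G'.verts.ncard → G'.edgeSet.ncard + 3 ≤ 2 * G'.verts.ncard

/-- The quadratic form `⟨z, z⟩ = z₀² + z₁²` on `ℂ²`. -/
def qf (z : Fin 2 → ℂ) : ℂ := z 0 ^ 2 + z 1 ^ 2

/-- A realization `ρ : V → ℂ²` is compatible with a labeling `lam : E → ℂ` if for every
edge `e = {u,v}` one has `lam e = ⟨ρ(u) - ρ(v), ρ(u) - ρ(v)⟩`. -/
def Compatible (G : SimpleGraph V) (lam : ↥G.edgeSet → ℂ) (ρ : V → Fin 2 → ℂ) : Prop :=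
  ∀ e : ↥G.edgeSet, ∀ u v : V, (e : Sym2 V) = s(u, v) → lam e = qf (ρ u - ρ v)

/-- Two realizations are equivalent if they differ by a direct complex isometry
`z ↦ A z + b` with `Aᵀ A = 1` and `det A = 1`. -/
def Equivalent (ρ₁ ρ₂ : V → Fin 2 → ℂ) : Prop :=
  ∃ (A : Matrix (Fin 2) (Fin 2) ℂ) (b : Fin 2 → ℂ),
    A.transpose * A = 1 ∧ A.det = 1 ∧ ∀ v, ρ₁ v = A.mulVec (ρ₂ v) + b

/-- A labeled graph `(G, lam)` is rigid if it admits a compatible realization and only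
finitely many compatible realizations up to equivalence. -/
def Rigid (G : SimpleGraph V) (lam : ↥G.edgeSet → ℂ) : Prop :=
  (∃ ρ, Compatible G lam ρ) ∧
  ∃ F : Set (V → Fin 2 → ℂ), F.Finite ∧
    ∀ ρ, Compatible G lam ρ → ∃ ρ' ∈ F, Equivalent ρ ρ'

/-- A graph is generically rigid if `(G, lam)` is rigid for all labelings outside the zero
set of some nonzero polynomial. -/
def GenericallyRigid (G : SimpleGraph V) : Prop :=
  ∃ P : MvPolynomial ↥G.edgeSet ℂ, P ≠ 0 ∧
    ∀ lam : ↥G.edgeSet → ℂ, MvPolynomial.eval lam P ≠ 0 → Rigid G lam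

/-- The polynomial map `h_G` on all of `ℂ^{2|V|}`, sending a tuple of points to the vector
of squared edge lengths. -/
def hMap (G : SimpleGraph V) (z : V → Fin 2 → ℂ) : ↥G.edgeSet → ℂ := fun e =>
  Sym2.lift ⟨fun u v => (z u 0 - z v 0) ^ 2 + (z u 1 - z v 1) ^ 2, by intro a b; ring⟩
    (e : Sym2 V)

/-- Membership in the linear subspace `ℂ^{2|V|-3} ⊆ ℂ^{2|V|}` determined by the chosen edge
`{ubar, vbar}`: the conditions `x_ū = y_ū = 0` and `x_v̄ = 0`. -/
def InDomain (ubar vbar : V) (z : V → Fin 2 → ℂ) : Prop :=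
  z ubar 0 = 0 ∧ z ubar 1 = 0 ∧ z vbar 0 = 0

/-- The restriction of `h_G` to `ℂ^{2|V|-3}` is dominant: its image is not contained in the
zero set of any nonzero polynomial. -/
def HDominant (G : SimpleGraph V) (ubar vbar : V) : Prop :=
  ∀ P : MvPolynomial ↥G.edgeSet ℂ,
    (∀ z, InDomain ubar vbar z → MvPolynomial.eval (hMap G z) P = 0) → P = 0

/-- The fiber of (the restriction of) `h_G` over a labeling `lam`. -/
def HFiber (G : SimpleGraph V) (ubar vbar : V) (lam : ↥G.edgeSet → ℂ) :
    Set (V → Fin 2 → ℂ) :=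
  {z | InDomain ubar vbar z ∧ hMap G z = lam}

/-- The quotient `ℂ^V / ⟨(1,…,1)⟩` of `ℂ^V` by the line of constant vectors. -/
abbrev ModV (V : Type) := (V → ℂ) ⧸ (Submodule.span ℂ {(fun _ => 1 : V → ℂ)})

/-- The value on an edge of the product `(x_u - x_v)(y_u - y_v)`, which is well defined on
unordered edges. -/
def fgVal (x y : V → ℂ) (s : Sym2 V) : ℂ :=
  Sym2.lift ⟨fun u v => (x u - x v) * (y u - y v), by intro a b; ring⟩ s

/-- The fiber of the rational map
`f_G : ℙ(ℂ^V/⟨1⟩) × ℙ(ℂ^V/⟨1⟩) ⇢ ℙ(ℂ^E)` over the projective point `[lam]`: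
the set of pairs of projective points at which `f_G` is defined and takes the value `[lam]`. -/
def FFiber (G : SimpleGraph V) (lam : ↥G.edgeSet → ℂ) :
    Set (Projectivization ℂ (ModV V) × Projectivization ℂ (ModV V)) :=
  {XY | ∃ (x y : V → ℂ)
    (hx : (Submodule.Quotient.mk x : ModV V) ≠ 0)
    (hy : (Submodule.Quotient.mk y : ModV V) ≠ 0),
    XY.1 = Projectivization.mk ℂ (Submodule.Quotient.mk x) hx ∧
    XY.2 = Projectivization.mk ℂ (Submodule.Quotient.mk y) hy ∧
    (fun e : ↥G.edgeSet => fgVal x y (e : Sym2 V)) ≠ 0 ∧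
    ∃ c : ℂ, c ≠ 0 ∧ ∀ e : ↥G.edgeSet, fgVal x y (e : Sym2 V) = c * lam e}

/-- Graphs constructible from a single edge by the two Henneberg rules. -/
inductive Henneberg : {n : ℕ} → SimpleGraph (Fin n) → Prop where
  | base : Henneberg (⊤ : SimpleGraph (Fin 2))
  | rule1 {n : ℕ} {G : SimpleGraph (Fin n)} (u v : Fin n) (huv : u ≠ v)
      (h : Henneberg G) :
      Henneberg (SimpleGraph.fromRel (fun a b =>
        (∃ a₀ b₀ : Fin n, a = a₀.castSucc ∧ b = b₀.castSucc ∧ G.Adj a₀ b₀) ∨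
        (a = u.castSucc ∧ b = Fin.last n) ∨ (a = v.castSucc ∧ b = Fin.last n)))
  | rule2 {n : ℕ} {G : SimpleGraph (Fin n)} (u v w : Fin n) (huv : u ≠ v) (huw : u ≠ w)
      (hvw : v ≠ w) (hadj : G.Adj u v) (h : Henneberg G) :
      Henneberg (SimpleGraph.fromRel (fun a b =>
        (∃ a₀ b₀ : Fin n, a = a₀.castSucc ∧ b = b₀.castSucc ∧ G.Adj a₀ b₀ ∧
          ¬(a₀ = u ∧ b₀ = v) ∧ ¬(a₀ = v ∧ b₀ = u)) ∨
        (a = u.castSucc ∧ b = Fin.last n) ∨ (a = v.castSucc ∧ b = Fin.last n) ∨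
        (a = w.castSucc ∧ b = Fin.last n)))

/-!
Both Henneberg rules preserve the Laman count: the new vertex brings two edges net, and a vertex
set containing it spans at most two more edges than the same set without it (for rule 2, a set
containing all three neighbours also contained the deleted edge).

Conversely, the degrees of a Laman graph on at least three vertices sum to `4|V| - 6` and are all at
least 2, so some vertex `t` has degree 2 or 3. If `deg t = 2`, then `G - t` is Laman and `G` arises
from it by rule 1. If `t` has neighbours `a, b, c`, call a vertex set of `G - t` tight if it spans
exactly `2|X| - 3` edges. No tight set contains `a, b, c`, since adding `t` would give too many
edges; and two tight sets meeting in two vertices, or three meeting pairwise in one vertex, have a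
tight union. Hence some pair, say `a, b`, lies in no tight set, so `G - t + ab` is Laman and `G`
arises from it by rule 2.
-/

open Finset SimpleGraph

section Counting

variable {α β : Type*} {G : SimpleGraph α} {X Y : Finset α} {a b t : α}

def edgesIn (G : SimpleGraph α) (X : Finset α) : Finset (Sym2 α) := {e ∈ X.sym2 | e ∈ G.edgeSet}

lemma edgesIn_subset_edgesIn_of_le {G' : SimpleGraph α} (h : G ≤ G') :
    edgesIn G X ⊆ edgesIn G' X := fun e he => by
  rw [edgesIn, mem_filter] at he ⊢
  exact ⟨he.1, edgeSet_mono h he.2⟩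

lemma mk_mem_edgesIn : s(a, b) ∈ edgesIn G X ↔ a ∈ X ∧ b ∈ X ∧ G.Adj a b := by
  simp [edgesIn, and_assoc]

lemma edgesIn_mono (h : X ⊆ Y) : edgesIn G X ⊆ edgesIn G Y :=
  filter_subset_filter _ (sym2_mono h)

lemma edgesIn_eq_empty_of_card_le_one (h : #X ≤ 1) : edgesIn G X = ∅ := by
  refine eq_empty_of_forall_notMem fun e he => ?_
  induction e using Sym2.ind with
  | _ x y =>
    obtain ⟨hx, hy, hxy⟩ := mk_mem_edgesIn.1 he
    exact hxy.ne (card_le_one.1 h x hx y hy)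

lemma edgesIn_pair [DecidableEq α] (h : G.Adj a b) : edgesIn G {a, b} = {s(a, b)} := by
  ext e
  induction e using Sym2.ind with
  | _ x y =>
    rw [mk_mem_edgesIn, mem_singleton, Sym2.eq_iff]
    simp only [mem_insert, mem_singleton]
    constructor
    · rintro ⟨rfl | rfl, rfl | rfl, hxy⟩ <;> simp_all
    · rintro (⟨rfl, rfl⟩ | ⟨rfl, rfl⟩) <;> simp [h, h.symm]

lemma card_edgesIn_add_card_edgesIn_le [DecidableEq α] (X Y : Finset α) :
    #(edgesIn G X) + #(edgesIn G Y) ≤ #(edgesIn G (X ∪ Y)) + #(edgesIn G (X ∩ Y)) := by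
  have hinter : edgesIn G (X ∩ Y) = edgesIn G X ∩ edgesIn G Y := by
    ext e
    simp only [edgesIn, mem_inter, mem_filter, mem_sym2_iff]
    grind
  have hunion : edgesIn G X ∪ edgesIn G Y ⊆ edgesIn G (X ∪ Y) :=
    union_subset (edgesIn_mono subset_union_left)
      (edgesIn_mono subset_union_right)
  rw [← card_union_add_card_inter, hinter]
  exact Nat.add_le_add_right (card_le_card hunion) _

lemma disjoint_edgesIn [DecidableEq α] (h : #(X ∩ Y) ≤ 1) :
    Disjoint (edgesIn G X) (edgesIn G Y) := by
  refine disjoint_left.2 fun e hX hY => ?_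
  induction e using Sym2.ind with
  | _ x y =>
    obtain ⟨hxX, hyX, hxy⟩ := mk_mem_edgesIn.1 hX
    obtain ⟨hxY, hyY, -⟩ := mk_mem_edgesIn.1 hY
    exact hxy.ne (card_le_one.1 h x (mem_inter.2 ⟨hxX, hxY⟩) y
      (mem_inter.2 ⟨hyX, hyY⟩))

lemma card_edgesIn_insert [DecidableEq α] (ht : t ∉ X) :
    #(edgesIn G (insert t X)) = #(edgesIn G X) + #{y ∈ X | G.Adj t y} := by
  have hdisj : Disjoint (edgesIn G X) ({y ∈ X | G.Adj t y}.map (Sym2.mkEmbedding t)) := by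
    refine disjoint_left.2 fun e he he' => ?_
    obtain ⟨y, -, rfl⟩ := mem_map.1 he'
    exact ht (mk_mem_edgesIn.1 he).1
  rw [← card_map (Sym2.mkEmbedding t), ← card_union_of_disjoint hdisj]
  congr 1
  ext e
  induction e using Sym2.ind with
  | _ x y =>
    simp only [mk_mem_edgesIn, mem_union, mem_map, mem_filter,
      mem_insert, Sym2.mkEmbedding_apply, Sym2.eq_iff]
    constructor
    · rintro ⟨rfl | hx, rfl | hy, hxy⟩
      · exact absurd hxy G.irrefl
      · exact Or.inr ⟨y, ⟨hy, hxy⟩, Or.inl ⟨rfl, rfl⟩⟩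
      · exact Or.inr ⟨x, ⟨hx, hxy.symm⟩, Or.inr ⟨rfl, rfl⟩⟩
      · exact Or.inl ⟨hx, hy, hxy⟩
    · rintro (⟨hx, hy, hxy⟩ | ⟨z, ⟨hz, htz⟩, ⟨rfl, rfl⟩ | ⟨rfl, rfl⟩⟩)
      · exact ⟨Or.inr hx, Or.inr hy, hxy⟩
      · exact ⟨Or.inl rfl, Or.inr hz, htz⟩
      · exact ⟨Or.inr hz, Or.inl rfl, htz.symm⟩

lemma card_edgesIn_comap (f : β ↪ α) (Y : Finset β) :
    #(edgesIn (G.comap f) Y) = #(edgesIn G (Y.map f)) := by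
  rw [edgesIn, edgesIn, sym2_map, filter_map, card_map]
  congr 1
  refine filter_congr fun e _ => ?_
  induction e using Sym2.ind with
  | _ x y => simp

lemma card_edgesIn_sup_edge [DecidableEq α] (hab : ¬G.Adj a b) (hne : a ≠ b) (X : Finset α) :
    #(edgesIn (G ⊔ edge a b) X) = #(edgesIn G X) + if a ∈ X ∧ b ∈ X then 1 else 0 := by
  split_ifs with h
  · rw [← card_insert_of_notMem (s := edgesIn G X) (a := s(a, b))
      (fun h' => hab (mk_mem_edgesIn.1 h').2.2)]
    congr 1
    ext e
    induction e using Sym2.ind with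
    | _ x y =>
      simp only [mk_mem_edgesIn, mem_insert, sup_adj, edge_adj, Sym2.eq_iff]
      grind
  · congr 1
    ext e
    induction e using Sym2.ind with
    | _ x y =>
      simp only [mk_mem_edgesIn, sup_adj, edge_adj]
      grind

end Counting

section Sparsity

variable {α β : Type*} {G : SimpleGraph α} {X Y : Finset α} {a b c : α}

def IsSparse (G : SimpleGraph α) : Prop :=
  ∀ X : Finset α, 2 ≤ #X → #(edgesIn G X) + 3 ≤ 2 * #X

def IsTight (G : SimpleGraph α) (X : Finset α) : Prop :=
  #(edgesIn G X) + 3 = 2 * #X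

lemma IsSparse.comap (hG : IsSparse G) (f : β ↪ α) : IsSparse (G.comap f) := fun Y hY => by
  rw [card_edgesIn_comap, ← card_map f]
  exact hG _ (by rwa [card_map])

lemma IsSparse.card_edgesIn_add_le (hG : IsSparse G) (hX : X.Nonempty) {k : ℕ} (hk : k ≤ 2)
    (hkX : k ≤ #X) : #(edgesIn G X) + k + 1 ≤ 2 * #X := by
  have := card_pos.2 hX
  rcases Nat.lt_or_ge #X 2 with h | h
  · rw [edgesIn_eq_empty_of_card_le_one (by omega), card_empty]
    omega
  · have := hG X h
    omega

lemma isTight_pair [DecidableEq α] (h : G.Adj a b) : IsTight G {a, b} := by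
  rw [IsTight, edgesIn_pair h, card_singleton, card_pair h.ne]

lemma IsSparse.isTight_union [DecidableEq α] (hG : IsSparse G) (hX : IsTight G X) (hY : IsTight G Y)
    (h : 2 ≤ #(X ∩ Y)) : IsTight G (X ∪ Y) := by
  have hsuper := card_edgesIn_add_card_edgesIn_le (G := G) X Y
  have hcard := card_union_add_card_inter X Y
  have hinter := hG _ h
  have hunion := hG (X ∪ Y)
    (h.trans (card_le_card (inter_subset_left.trans subset_union_left)))
  unfold IsTight at *
  omega

/-- The union has at least three vertices fewer than `X₁`, `X₂`, `X₃` together, while their edge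
sets are disjoint. -/
lemma IsSparse.isTight_union_three [DecidableEq α] {X₁ X₂ X₃ : Finset α} (hG : IsSparse G)
    (hT₁ : IsTight G X₁) (hT₂ : IsTight G X₂) (hT₃ : IsTight G X₃)
    (h₁₂ : #(X₁ ∩ X₂) ≤ 1) (h₁₃ : #(X₁ ∩ X₃) ≤ 1) (h₂₃ : #(X₂ ∩ X₃) ≤ 1)
    (ha : a ∈ X₁ ∩ X₂) (hb : b ∈ X₁ ∩ X₃) (hc : c ∈ X₂ ∩ X₃) (hbc : b ≠ c) :
    IsTight G (X₁ ∪ X₂ ∪ X₃) := by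
  have hedges : #(edgesIn G X₁) + #(edgesIn G X₂) + #(edgesIn G X₃) ≤
      #(edgesIn G (X₁ ∪ X₂ ∪ X₃)) := by
    rw [← card_union_of_disjoint (disjoint_edgesIn h₁₂),
      ← card_union_of_disjoint (disjoint_union_left.2
        ⟨disjoint_edgesIn h₁₃, disjoint_edgesIn h₂₃⟩)]
    refine card_le_card (union_subset (union_subset ?_ ?_) ?_) <;>
      apply edgesIn_mono <;> intro x <;> simp +contextual
  have h₁₂' : 1 ≤ #(X₁ ∩ X₂) := card_pos.2 ⟨a, ha⟩
  have h₁₂₃ : 2 ≤ #((X₁ ∪ X₂) ∩ X₃) := by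
    rw [← card_pair hbc]
    refine card_le_card fun x hx => ?_
    simp only [mem_insert, mem_singleton] at hx
    simp only [mem_inter, mem_union] at hb hc ⊢
    rcases hx with rfl | rfl <;> tauto
  have hcard₁ := card_union_add_card_inter X₁ X₂
  have hcard₂ := card_union_add_card_inter (X₁ ∪ X₂) X₃
  have hunion := hG (X₁ ∪ X₂ ∪ X₃)
    (h₁₂₃.trans (card_le_card inter_subset_right) |>.trans
      (card_le_card subset_union_right))
  unfold IsTight at *
  omega

/-- Otherwise the tight sets through the three pairs glue to a tight set through `a, b, c`. -/
lemma IsSparse.exists_pair_notMem_isTight [DecidableEq α] (hG : IsSparse G) (hbc : b ≠ c)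
    (habc : ∀ X, a ∈ X → b ∈ X → c ∈ X → ¬IsTight G X) :
    (∀ X, a ∈ X → b ∈ X → ¬IsTight G X) ∨ (∀ X, a ∈ X → c ∈ X → ¬IsTight G X) ∨
      (∀ X, b ∈ X → c ∈ X → ¬IsTight G X) := by
  by_contra! h
  obtain ⟨⟨X₁, ha₁, hb₁, hT₁⟩, ⟨X₂, ha₂, hc₂, hT₂⟩, ⟨X₃, hb₃, hc₃, hT₃⟩⟩ := h
  by_cases h₁₂ : 2 ≤ #(X₁ ∩ X₂)
  · exact habc _ (by simp [ha₁]) (by simp [hb₁]) (by simp [hc₂]) (hG.isTight_union hT₁ hT₂ h₁₂)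
  by_cases h₁₃ : 2 ≤ #(X₁ ∩ X₃)
  · exact habc _ (by simp [ha₁]) (by simp [hb₁]) (by simp [hc₃]) (hG.isTight_union hT₁ hT₃ h₁₃)
  by_cases h₂₃ : 2 ≤ #(X₂ ∩ X₃)
  · exact habc _ (by simp [ha₂]) (by simp [hb₃]) (by simp [hc₂]) (hG.isTight_union hT₂ hT₃ h₂₃)
  exact habc _ (by simp [ha₁]) (by simp [hb₁]) (by simp [hc₃])
    (hG.isTight_union_three hT₁ hT₂ hT₃ (by omega) (by omega) (by omega)
      (mem_inter.2 ⟨ha₁, ha₂⟩) (mem_inter.2 ⟨hb₁, hb₃⟩)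
      (mem_inter.2 ⟨hc₂, hc₃⟩) hbc)

end Sparsity

section LamanCond

lemma coe_edgesIn_univ (G : SimpleGraph V) :
    (edgesIn G univ : Set (Sym2 V)) = G.edgeSet := by
  ext e
  induction e using Sym2.ind with
  | _ x y => simp [mk_mem_edgesIn]

lemma edgesIn_univ (G : SimpleGraph V) : edgesIn G univ = G.edgeFinset := by
  rw [← coe_inj, coe_edgesIn_univ, coe_edgeFinset]

lemma lamanCond_iff {G : SimpleGraph V} :
    LamanCond G ↔ #(edgesIn G univ) + 3 = 2 * Fintype.card V ∧ IsSparse G := by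
  rw [LamanCond, ← coe_edgesIn_univ, Set.ncard_coe_finset]
  refine and_congr_right' ⟨fun h X hX => ?_, fun h G' hG' => ?_⟩
  · have hE : ((⊤ : G.Subgraph).induce X).edgeSet = edgesIn G X := by
      ext e
      induction e using Sym2.ind with
      | _ x y => simp [mk_mem_edgesIn]
    simpa [hE] using h ((⊤ : G.Subgraph).induce X) (by simpa)
  · have hE : G'.edgeSet ⊆ edgesIn G G'.verts.toFinset := by
      intro e
      induction e using Sym2.ind with
      | _ x y =>
        rw [Subgraph.mem_edgeSet, mem_coe, mk_mem_edgesIn]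
        intro h
        simpa using ⟨G'.edge_vert h, G'.edge_vert h.symm, G'.adj_sub h⟩
    have hle := Set.ncard_le_ncard hE (finite_toSet _)
    rw [Set.ncard_coe_finset] at hle
    rw [Set.ncard_eq_toFinset_card' G'.verts] at hG' ⊢
    have := h _ hG'
    omega

lemma lamanCond_congr {W : Type} [Fintype W] {G : SimpleGraph V} {G' : SimpleGraph W}
    (e : G ≃g G') : LamanCond G ↔ LamanCond G' := by
  suffices h : ∀ {V W : Type} [Fintype V] [Fintype W] {G : SimpleGraph V} {G' : SimpleGraph W},
      G ≃g G' → LamanCond G' → LamanCond G from ⟨h e.symm, h e⟩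
  intro V W _ _ G G' e hL
  have hG : G'.comap e.toEquiv.toEmbedding = G := by
    ext
    exact e.map_adj_iff
  obtain ⟨htot, hsp⟩ := lamanCond_iff.1 hL
  rw [lamanCond_iff, ← hG, card_edgesIn_comap, map_univ_equiv, Fintype.card_congr e.toEquiv]
  exact ⟨htot, hsp.comap _⟩

lemma card_edgesIn_univ_eq_add_degree (G : SimpleGraph V) (t : V) :
    #(edgesIn G univ) = #(edgesIn G (univ.erase t)) + G.degree t := by
  have h := card_edgesIn_insert (G := G) (notMem_erase t univ)
  rw [insert_erase (mem_univ t), filter_erase,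
    erase_eq_of_notMem (s := {y | G.Adj t y}) (by simp)] at h
  rwa [← card_neighborFinset_eq_degree, neighborFinset_eq_filter]

/-- The average degree is below 4, and a vertex of degree at most 1 would leave too many edges on
the other vertices. -/
lemma exists_degree_eq_two_or_three {G : SimpleGraph V} (hL : LamanCond G)
    (hV : 3 ≤ Fintype.card V) : ∃ t, G.degree t = 2 ∨ G.degree t = 3 := by
  obtain ⟨htot, hG⟩ := lamanCond_iff.1 hL
  have hmin : ∀ t, 2 ≤ G.degree t := fun t => by
    have herase := card_edgesIn_univ_eq_add_degree G t
    have := hG (univ.erase t) (by rw [card_erase_of_mem (mem_univ t), card_univ]; omega)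
    rw [card_erase_of_mem (mem_univ t), card_univ] at this
    omega
  have hsum : ∑ t, G.degree t < ∑ _t : V, 4 := by
    rw [sum_degrees_eq_twice_card_edges, ← edgesIn_univ, sum_const, card_univ,
      smul_eq_mul]
    omega
  obtain ⟨t, -, ht⟩ := exists_lt_of_sum_lt hsum
  exact ⟨t, by have := hmin t; omega⟩

end LamanCond

section VertexExtension

variable {n : ℕ} {H : SimpleGraph (Fin (n + 1))}

/-- A graph `H` on `Fin (n + 1)` consists of `H.comap Fin.castSucc` and of the last vertex joined
to `lastNbrs H`; the Henneberg rules add the vertex `Fin.last n`. -/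
def lastNbrs (H : SimpleGraph (Fin (n + 1))) : Finset (Fin n) :=
  {y | H.Adj (Fin.last n) y.castSucc}

lemma card_lastNbrs : #(lastNbrs H) = H.degree (Fin.last n) := by
  rw [← card_neighborFinset_eq_degree, ← card_map Fin.castSuccEmb]
  congr 1
  ext x
  cases x using Fin.lastCases <;> simp [lastNbrs]

lemma card_edgesIn_map_castSucc (Y : Finset (Fin n)) :
    #(edgesIn H (Y.map Fin.castSuccEmb)) = #(edgesIn (H.comap Fin.castSucc) Y) :=
  (card_edgesIn_comap _ Y).symm

lemma card_edgesIn_insert_last (Y : Finset (Fin n)) :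
    #(edgesIn H (insert (Fin.last n) (Y.map Fin.castSuccEmb))) =
      #(edgesIn (H.comap Fin.castSucc) Y) + #(Y ∩ lastNbrs H) := by
  rw [card_edgesIn_insert (by simp), card_edgesIn_map_castSucc, filter_map,
    card_map]
  congr 2
  ext
  rw [mem_filter, mem_inter]
  simp [lastNbrs]

lemma card_edgesIn_univ_fin_succ :
    #(edgesIn H univ) = #(edgesIn (H.comap Fin.castSucc) univ) + #(lastNbrs H) := by
  rw [Fin.univ_castSuccEmb, cons_eq_insert, card_edgesIn_insert_last, univ_inter]

lemma exists_eq_map_castSuccEmb (X : Finset (Fin (n + 1))) :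
    ∃ Y : Finset (Fin n),
      X = Y.map Fin.castSuccEmb ∨ X = insert (Fin.last n) (Y.map Fin.castSuccEmb) := by
  refine ⟨X.preimage Fin.castSucc (Fin.castSucc_injective n).injOn, ?_⟩
  have hY : (X.preimage Fin.castSucc (Fin.castSucc_injective n).injOn).map Fin.castSuccEmb =
      X.erase (Fin.last n) := by
    ext x
    cases x using Fin.lastCases <;> simp [Fin.castSucc_ne_last]
  rw [hY]
  by_cases h : Fin.last n ∈ X
  · exact Or.inr (insert_erase h).symm
  · exact Or.inl (erase_eq_of_notMem h).symm

lemma isSparse_fin_succ_iff : IsSparse H ↔ IsSparse (H.comap Fin.castSucc) ∧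
    ∀ Y : Finset (Fin n), Y.Nonempty →
      #(edgesIn (H.comap Fin.castSucc) Y) + #(Y ∩ lastNbrs H) + 1 ≤ 2 * #Y := by
  have hcard (Y : Finset (Fin n)) : #(insert (Fin.last n) (Y.map Fin.castSuccEmb)) = #Y + 1 := by
    rw [card_insert_of_notMem (by simp), card_map]
  refine ⟨fun h => ⟨h.comap Fin.castSuccEmb, fun Y hY => ?_⟩, fun ⟨h₀, h₁⟩ X hX => ?_⟩
  · have := h (insert (Fin.last n) (Y.map Fin.castSuccEmb))
      (by rw [hcard]; have := hY.card_pos; omega)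
    rw [card_edgesIn_insert_last, hcard] at this
    omega
  · obtain ⟨Y, rfl | rfl⟩ := exists_eq_map_castSuccEmb X
    · rw [card_map] at hX ⊢
      rw [card_edgesIn_map_castSucc]
      exact h₀ Y hX
    · rw [hcard] at hX ⊢
      rw [card_edgesIn_insert_last]
      have := h₁ Y (card_pos.1 (by omega))
      omega

lemma lamanCond_iff_of_lastNbrs_eq_pair {u v : Fin n} (h : lastNbrs H = {u, v}) (huv : u ≠ v) :
    LamanCond H ↔ LamanCond (H.comap Fin.castSucc) := by
  rw [lamanCond_iff, lamanCond_iff, isSparse_fin_succ_iff, card_edgesIn_univ_fin_succ, h,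
    card_pair huv, Fintype.card_fin, Fintype.card_fin]
  refine ⟨fun ⟨htot, hsp, _⟩ => ⟨by omega, hsp⟩,
    fun ⟨htot, hsp⟩ => ⟨by omega, hsp, fun Y hY => hsp.card_edgesIn_add_le hY ?_ ?_⟩⟩
  · exact (card_le_card inter_subset_right).trans card_le_two
  · exact card_le_card inter_subset_left

lemma lamanCond_of_lamanCond_sup_edge {a b c : Fin n} (h : lastNbrs H = {a, b, c})
    (hab : a ≠ b) (hac : a ≠ c) (hbc : b ≠ c) (hadj : ¬(H.comap Fin.castSucc).Adj a b)
    (hL : LamanCond (H.comap Fin.castSucc ⊔ edge a b)) : LamanCond H := by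
  have hcount := card_edgesIn_sup_edge hadj hab
  obtain ⟨htot, hsp⟩ := lamanCond_iff.1 hL
  have hsp₀ : IsSparse (H.comap Fin.castSucc) := fun X hX => by
    have := hsp X hX
    have := hcount X
    omega
  have huniv := hcount univ
  rw [if_pos ⟨mem_univ a, mem_univ b⟩] at huniv
  rw [Fintype.card_fin] at htot
  rw [lamanCond_iff, isSparse_fin_succ_iff, card_edgesIn_univ_fin_succ, h,
    card_eq_three.2 ⟨a, b, c, hab, hac, hbc, rfl⟩, Fintype.card_fin]
  refine ⟨by omega, hsp₀, fun Y hY => ?_⟩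
  by_cases habY : a ∈ Y ∧ b ∈ Y
  · have hY₂ : 2 ≤ #Y := by
      rw [← card_pair hab]
      exact card_le_card (insert_subset habY.1 (singleton_subset_iff.2 habY.2))
    have hsparse := hsp Y hY₂
    have hsup := hcount Y
    rw [if_pos habY] at hsup
    have hnbrs : #(Y ∩ {a, b, c}) ≤ 3 := (card_le_card inter_subset_right).trans card_le_three
    omega
  · refine hsp₀.card_edgesIn_add_le hY ?_ (card_le_card inter_subset_left)
    rcases not_and_or.1 habY with ha | hb
    · rw [inter_insert_of_notMem ha]
      exact (card_le_card inter_subset_right).trans card_le_two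
    · rw [insert_comm, inter_insert_of_notMem hb]
      exact (card_le_card inter_subset_right).trans card_le_two

lemma lamanCond_sup_edge {a b : Fin n} (hL : LamanCond H) (hN : #(lastNbrs H) = 3) (hab : a ≠ b)
    (hgood : ∀ Y, a ∈ Y → b ∈ Y → ¬IsTight (H.comap Fin.castSucc) Y) :
    LamanCond (H.comap Fin.castSucc ⊔ edge a b) := by
  have hadj : ¬(H.comap Fin.castSucc).Adj a b := fun h =>
    hgood _ (by simp) (by simp) (isTight_pair h)
  have hcount := card_edgesIn_sup_edge hadj hab
  obtain ⟨htot, hsp⟩ := lamanCond_iff.1 hL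
  rw [isSparse_fin_succ_iff] at hsp
  rw [card_edgesIn_univ_fin_succ, hN, Fintype.card_fin] at htot
  have huniv := hcount univ
  rw [if_pos ⟨mem_univ a, mem_univ b⟩] at huniv
  rw [lamanCond_iff, Fintype.card_fin]
  refine ⟨by omega, fun Y hY => ?_⟩
  have hsparse := hsp.1 Y hY
  have hsup := hcount Y
  by_cases habY : a ∈ Y ∧ b ∈ Y
  · have hnot := hgood Y habY.1 habY.2
    rw [if_pos habY] at hsup
    unfold IsTight at hnot
    omega
  · rw [if_neg habY] at hsup
    omega

lemma not_isTight_of_three_le_card_inter_lastNbrs (hH : IsSparse H) {Y : Finset (Fin n)}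
    (hY : 3 ≤ #(Y ∩ lastNbrs H)) : ¬IsTight (H.comap Fin.castSucc) Y := by
  intro hT
  have hne : Y.Nonempty :=
    (card_pos.1 (show 0 < #(Y ∩ lastNbrs H) by omega)).mono inter_subset_left
  have := (isSparse_fin_succ_iff.1 hH).2 Y hne
  have := card_le_card (inter_subset_left (s₁ := Y) (s₂ := lastNbrs H))
  unfold IsTight at hT
  omega

end VertexExtension

section EdgeSurgery

variable {α β : Type*} {G : SimpleGraph α} {a b : α}

lemma deleteEdges_sup_edge (h : G.Adj a b) : G.deleteEdges {s(a, b)} ⊔ edge a b = G := by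
  ext x y
  simp only [sup_adj, deleteEdges_adj, edge_adj, Set.mem_singleton_iff, Sym2.eq_iff]
  grind [G.ne_of_adj, G.adj_comm]

lemma sup_edge_deleteEdges (h : ¬G.Adj a b) : (G ⊔ edge a b).deleteEdges {s(a, b)} = G := by
  rw [deleteEdges_sup, deleteEdges_edge (Set.mem_singleton _), sup_bot_eq,
    deleteEdges_eq_self, Set.disjoint_singleton_right]
  exact h

def _root_.SimpleGraph.Iso.deleteEdge {G' : SimpleGraph β} (φ : G ≃g G') (a b : α) :
    G.deleteEdges {s(a, b)} ≃g G'.deleteEdges {s(φ a, φ b)} where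
  toEquiv := φ.toEquiv
  map_rel_iff' := by
    intro x y
    simp [φ.map_adj_iff]

end EdgeSurgery

section HennebergSteps

variable {n : ℕ}

-- The graphs built by the constructors `Henneberg.rule1` and `Henneberg.rule2`.
def hennebergRule1 (G : SimpleGraph (Fin n)) (u v : Fin n) : SimpleGraph (Fin (n + 1)) :=
  fromRel (fun a b =>
    (∃ a₀ b₀ : Fin n, a = a₀.castSucc ∧ b = b₀.castSucc ∧ G.Adj a₀ b₀) ∨
    (a = u.castSucc ∧ b = Fin.last n) ∨ (a = v.castSucc ∧ b = Fin.last n))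

def hennebergRule2 (G : SimpleGraph (Fin n)) (u v w : Fin n) : SimpleGraph (Fin (n + 1)) :=
  fromRel (fun a b =>
    (∃ a₀ b₀ : Fin n, a = a₀.castSucc ∧ b = b₀.castSucc ∧ G.Adj a₀ b₀ ∧
      ¬(a₀ = u ∧ b₀ = v) ∧ ¬(a₀ = v ∧ b₀ = u)) ∨
    (a = u.castSucc ∧ b = Fin.last n) ∨ (a = v.castSucc ∧ b = Fin.last n) ∨
    (a = w.castSucc ∧ b = Fin.last n))

variable (G : SimpleGraph (Fin n)) (u v w : Fin n)

lemma comap_castSucc_hennebergRule1 : (hennebergRule1 G u v).comap Fin.castSucc = G := by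
  ext a b
  simp only [hennebergRule1, comap_adj, fromRel_adj, Fin.castSucc_inj, Fin.castSucc_ne_last]
  grind [G.ne_of_adj, G.adj_comm]

lemma lastNbrs_hennebergRule1 : lastNbrs (hennebergRule1 G u v) = {u, v} := by
  ext x
  simp [lastNbrs, hennebergRule1, (Fin.castSucc_lt_last _).ne']

lemma comap_castSucc_hennebergRule2 :
    (hennebergRule2 G u v w).comap Fin.castSucc = G.deleteEdges {s(u, v)} := by
  ext a b
  simp only [hennebergRule2, comap_adj, fromRel_adj, deleteEdges_adj, Fin.castSucc_inj,
    Fin.castSucc_ne_last, Set.mem_singleton_iff, Sym2.eq_iff]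
  grind [G.ne_of_adj, G.adj_comm]

lemma lastNbrs_hennebergRule2 : lastNbrs (hennebergRule2 G u v w) = {u, v, w} := by
  ext x
  simp [lastNbrs, hennebergRule2, (Fin.castSucc_lt_last _).ne']

lemma nonempty_iso_of_comap_castSucc {m : ℕ} {H : SimpleGraph (Fin (n + 1))}
    {H' : SimpleGraph (Fin (m + 1))} {G : SimpleGraph (Fin n)} {G' : SimpleGraph (Fin m)}
    (φ : G ≃g G') (hH : H.comap Fin.castSucc = G) (hH' : H'.comap Fin.castSucc = G')
    (hlast : ∀ x, φ x ∈ lastNbrs H' ↔ x ∈ lastNbrs H) : Nonempty (H ≃g H') := by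
  subst hH hH'
  let e : Fin (n + 1) ≃ Fin (m + 1) :=
    finSuccEquivLast.trans (φ.toEquiv.optionCongr.trans finSuccEquivLast.symm)
  have he_last : e (Fin.last n) = Fin.last m := by simp [e]
  have he_castSucc (x : Fin n) : e x.castSucc = (φ x).castSucc := by simp [e]
  refine ⟨⟨e, fun {a b} => ?_⟩⟩
  have hadj_last (x : Fin n) :
      H'.Adj (Fin.last m) (e x.castSucc) ↔ H.Adj (Fin.last n) x.castSucc := by
    simpa [he_castSucc, lastNbrs] using hlast x
  cases a using Fin.lastCases <;> cases b using Fin.lastCases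
  · simp [he_last]
  · rw [he_last]
    exact hadj_last _
  · rw [he_last, H'.adj_comm, H.adj_comm]
    exact hadj_last _
  · rw [he_castSucc, he_castSucc]
    exact φ.map_adj_iff

end HennebergSteps

section LamanOfHenneberg

lemma lamanCond_top_fin_two : LamanCond (⊤ : SimpleGraph (Fin 2)) := by
  have htot : #(edgesIn (⊤ : SimpleGraph (Fin 2)) univ) = 1 := by
    rw [show (univ : Finset (Fin 2)) = {0, 1} by decide, edgesIn_pair (by simp),
      card_singleton]
  rw [lamanCond_iff, htot]
  refine ⟨rfl, fun X hX => ?_⟩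
  obtain rfl : X = univ := eq_univ_of_card X (le_antisymm (card_le_univ X) hX)
  rw [htot, card_univ, Fintype.card_fin]

theorem Henneberg.lamanCond {n : ℕ} {G : SimpleGraph (Fin n)} (h : Henneberg G) : LamanCond G := by
  induction h with
  | base => exact lamanCond_top_fin_two
  | @rule1 n G u v huv _ ih =>
    exact (lamanCond_iff_of_lastNbrs_eq_pair (lastNbrs_hennebergRule1 G u v) huv).2
      (by rwa [comap_castSucc_hennebergRule1])
  | @rule2 n G u v w huv huw hvw hadj _ ih =>
    refine lamanCond_of_lamanCond_sup_edge (H := hennebergRule2 G u v w)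
      (lastNbrs_hennebergRule2 G u v w) huv huw hvw ?_ ?_
    · simp [comap_castSucc_hennebergRule2]
    · rwa [comap_castSucc_hennebergRule2, deleteEdges_sup_edge hadj]

end LamanOfHenneberg

section HennebergOfLaman

def IsHennebergConstructible {α : Type*} (G : SimpleGraph α) : Prop :=
  ∃ (n : ℕ) (G' : SimpleGraph (Fin n)), Henneberg G' ∧ Nonempty (G ≃g G')

lemma IsHennebergConstructible.of_iso {α β : Type*} {G : SimpleGraph α} {G' : SimpleGraph β}
    (e : G ≃g G') (h : IsHennebergConstructible G') : IsHennebergConstructible G := by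
  obtain ⟨n, G'', hG'', ⟨φ⟩⟩ := h
  exact ⟨n, G'', hG'', ⟨e.trans φ⟩⟩

variable {n : ℕ} {H : SimpleGraph (Fin (n + 1))}

lemma isHennebergConstructible_of_comap_castSucc {u v : Fin n}
    (hc : IsHennebergConstructible (H.comap Fin.castSucc)) (h : lastNbrs H = {u, v})
    (huv : u ≠ v) : IsHennebergConstructible H := by
  obtain ⟨m, G, hG, ⟨φ⟩⟩ := hc
  refine ⟨m + 1, hennebergRule1 G (φ u) (φ v), .rule1 _ _ (φ.injective.ne huv) hG,
    nonempty_iso_of_comap_castSucc φ rfl (comap_castSucc_hennebergRule1 _ _ _) fun x => ?_⟩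
  simp [lastNbrs_hennebergRule1, h, φ.injective.eq_iff]

lemma isHennebergConstructible_of_sup_edge {a b c : Fin n}
    (hc : IsHennebergConstructible (H.comap Fin.castSucc ⊔ edge a b))
    (h : lastNbrs H = {a, b, c}) (hab : a ≠ b) (hac : a ≠ c) (hbc : b ≠ c)
    (hadj : ¬(H.comap Fin.castSucc).Adj a b) : IsHennebergConstructible H := by
  obtain ⟨m, G, hG, ⟨φ⟩⟩ := hc
  have hφ : G.Adj (φ a) (φ b) := φ.map_adj_iff.2 (by simp [edge_adj, hab])
  refine ⟨m + 1, hennebergRule2 G (φ a) (φ b) (φ c),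
    .rule2 _ _ _ (φ.injective.ne hab) (φ.injective.ne hac) (φ.injective.ne hbc) hφ hG,
    nonempty_iso_of_comap_castSucc (φ.deleteEdge a b) (sup_edge_deleteEdges hadj).symm
      (comap_castSucc_hennebergRule2 _ _ _ _) fun x => ?_⟩
  simp [lastNbrs_hennebergRule2, h, Iso.deleteEdge, φ.injective.eq_iff]

lemma isHennebergConstructible_of_lastNbrs_eq_triple
    (ih : ∀ G : SimpleGraph (Fin n), LamanCond G → IsHennebergConstructible G)
    (hL : LamanCond H) {a b c : Fin n} (h : lastNbrs H = {a, b, c}) (hab : a ≠ b) (hac : a ≠ c)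
    (hbc : b ≠ c) : IsHennebergConstructible H := by
  have hN : #(lastNbrs H) = 3 := by rw [h]; exact card_eq_three.2 ⟨a, b, c, hab, hac, hbc, rfl⟩
  have hsp := (lamanCond_iff.1 hL).2
  have step {p q r : Fin n} (hpqr : lastNbrs H = {p, q, r}) (hpq : p ≠ q) (hpr : p ≠ r)
      (hqr : q ≠ r) (hgood : ∀ Y, p ∈ Y → q ∈ Y → ¬IsTight (H.comap Fin.castSucc) Y) :
      IsHennebergConstructible H :=
    isHennebergConstructible_of_sup_edge (ih _ (lamanCond_sup_edge hL hN hpq hgood)) hpqr hpq hpr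
      hqr fun hadj => hgood _ (by simp) (by simp) (isTight_pair hadj)
  have habc (Y : Finset (Fin n)) (ha : a ∈ Y) (hb : b ∈ Y) (hc : c ∈ Y) :
      ¬IsTight (H.comap Fin.castSucc) Y := by
    refine not_isTight_of_three_le_card_inter_lastNbrs hsp ?_
    rw [inter_eq_right.2 (by simp [h, insert_subset_iff, ha, hb, hc]), hN]
  rcases (isSparse_fin_succ_iff.1 hsp).1.exists_pair_notMem_isTight hbc habc with hg | hg | hg
  · exact step h hab hac hbc hg
  · exact step (by rw [h, pair_comm]) hac hab hbc.symm hg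
  · exact step (by rw [h, insert_comm, pair_comm]) hbc hab.symm hac.symm hg

lemma eq_top_of_lamanCond_fin_two {G : SimpleGraph (Fin 2)} (hL : LamanCond G) : G = ⊤ := by
  have hsub : edgesIn G univ ⊆ edgesIn ⊤ univ := edgesIn_subset_edgesIn_of_le le_top
  have hcard : #(edgesIn (⊤ : SimpleGraph (Fin 2)) univ) ≤ #(edgesIn G univ) := by
    have hG := (lamanCond_iff.1 hL).1
    have htop := (lamanCond_iff.1 lamanCond_top_fin_two).1
    omega
  rw [← edgeSet_inj, ← coe_edgesIn_univ, ← coe_edgesIn_univ,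
    eq_of_subset_of_card_le hsub hcard]

theorem isHennebergConstructible_of_lamanCond :
    ∀ {n : ℕ} (H : SimpleGraph (Fin n)), LamanCond H → IsHennebergConstructible H
  | 0, _, hL | 1, _, hL => by simpa using (lamanCond_iff.1 hL).1
  | 2, H, hL => by
    obtain rfl := eq_top_of_lamanCond_fin_two hL
    exact ⟨2, ⊤, .base, ⟨.refl⟩⟩
  | n + 3, H, hL => by
    obtain ⟨t, ht⟩ := exists_degree_eq_two_or_three hL (by simp)
    let σ := Equiv.swap t (Fin.last (n + 2))
    let e := Iso.map σ H
    have hL' := (lamanCond_congr e).1 hL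
    have hdeg : #(lastNbrs (H.map σ)) = H.degree t := by
      rw [card_lastNbrs]
      convert e.degree_eq t using 2
      exact (Equiv.swap_apply_left t (Fin.last (n + 2))).symm
    refine IsHennebergConstructible.of_iso e ?_
    rcases ht with h2 | h3
    · obtain ⟨u, v, huv, h⟩ := card_eq_two.1 (hdeg.trans h2)
      exact isHennebergConstructible_of_comap_castSucc (isHennebergConstructible_of_lamanCond _
        ((lamanCond_iff_of_lastNbrs_eq_pair h huv).1 hL')) h huv
    · obtain ⟨a, b, c, hab, hac, hbc, h⟩ := card_eq_three.1 (hdeg.trans h3)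
      exact isHennebergConstructible_of_lastNbrs_eq_triple isHennebergConstructible_of_lamanCond
        hL' h hab hac hbc

end HennebergOfLaman

theorem statement2_general {V : Type} [Fintype V] (G : SimpleGraph V) :
    LamanCond G ↔
      ∃ (n : ℕ) (G' : SimpleGraph (Fin n)), Henneberg G' ∧ Nonempty (G ≃g G') := by
  refine ⟨fun hL => ?_, fun ⟨_, _, hG', ⟨e⟩⟩ => (lamanCond_congr e).2 hG'.lamanCond⟩
  let e := Iso.map (Fintype.equivFin V) G
  exact (isHennebergConstructible_of_lamanCond _ ((lamanCond_congr e).1 hL)).of_iso e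

/-- A (finite connected simple) graph is a Laman graph if and only if it
can be constructed, up to isomorphism, from the graph consisting of two vertices joined by
a single edge by a finite sequence of applications of the two Henneberg rules. -/
theorem statement2 {V : Type} [Fintype V] (G : SimpleGraph V) (hconn : G.Connected) :
    LamanCond G ↔
      ∃ (n : ℕ) (G' : SimpleGraph (Fin n)), Henneberg G' ∧ Nonempty (G ≃g G') :=
  statement2_general G

end LamanGraphs
end
end

section
/- Let B=(G,H) be a bigraph with biedge set ℰ without self-loops, fix a biedge ē∈ℰ and λ∈ℂ^{ℰ∖{ē}}, and let p∈ℙ(ℂ^ℰ) be the class of the vector whose ē-coordinate is 1 and whose e-coordinate is λ_e for e∈ℰ∖{ē}. Then there is a bijection between the fiber f_B^{-1}(p) (the set of points of ℙ(ℂ^V/L_G)×ℙ(ℂ^W/L_H) at which f_B is defined and takes the value p) and the affine solution set Z^B(λ). -/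
set_option maxHeartbeats 1000000

noncomputable section
open Classical

namespace LamanPaper

variable {V E : Type}

/-- The adjacency relation induced by an incidence map `ends`. -/
def adjRel (ends : E → Sym2 V) : V → V → Prop := fun u v => ∃ e : E, ends e = s(u, v)

/-- The setoid of connected components of the graph with incidence map `ends`. -/
def ccSetoid (ends : E → Sym2 V) : Setoid V :=
  ⟨Relation.EqvGen (adjRel ends), Relation.EqvGen.is_equivalence _⟩

/-- The number of connected components. -/
def numCC (ends : E → Sym2 V) : ℕ := Nat.card (Quotient (ccSetoid ends))

/-- The dimension of a graph: number of vertices minus number of connected components. -/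
def gDim (ends : E → Sym2 V) : ℕ := Nat.card V - numCC ends

/-- Restriction of a graph to a set of edges. -/
def restrictEnds (ends : E → Sym2 V) (S : Set E) : {e : E // e ∈ S} → Sym2 V :=
  fun e => ends e.1

/-- Deletion of a set of edges from a graph. -/
def deleteEnds (ends : E → Sym2 V) (S : Set E) : {e : E // e ∉ S} → Sym2 V :=
  fun e => ends e.1

/-- The setoid on vertices generated by contracting the edges in `S`. -/
def contrSetoid (ends : E → Sym2 V) (S : Set E) : Setoid V :=
  ⟨Relation.EqvGen fun u v => ∃ e ∈ S, ends e = s(u, v), Relation.EqvGen.is_equivalence _⟩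

/-- Contraction of the edges in `S`: the remaining edges join the equivalence classes of
their endpoints. -/
def contractEnds (ends : E → Sym2 V) (S : Set E) :
    {e : E // e ∉ S} → Sym2 (Quotient (contrSetoid ends S)) :=
  fun e => (ends e.1).map (Quotient.mk (contrSetoid ends S))

/-- An edge is a bridge if deleting it increases the number of connected components. -/
def IsBridge (ends : E → Sym2 V) (e : E) : Prop :=
  numCC ends < numCC (deleteEnds ends ({e} : Set E))

/-- The smaller endpoint of an (unordered) edge, with respect to a linear order. -/
def sMin [LinearOrder V] (s : Sym2 V) : V :=
  Sym2.lift ⟨fun a b => min a b, fun a b => min_comm a b⟩ s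

/-- The larger endpoint of an (unordered) edge, with respect to a linear order. -/
def sMax [LinearOrder V] (s : Sym2 V) : V :=
  Sym2.lift ⟨fun a b => max a b, fun a b => max_comm a b⟩ s

theorem sMin_mem [LinearOrder V] (s : Sym2 V) : sMin s ∈ s := by
  induction s using Sym2.ind with
  | _ x y => rcases min_choice x y with h | h <;> simp [sMin, Sym2.lift_mk, h, Sym2.mem_iff]

theorem sMax_mem [LinearOrder V] (s : Sym2 V) : sMax s ∈ s := by
  induction s using Sym2.ind with
  | _ x y => rcases max_choice x y with h | h <;> simp [sMax, Sym2.lift_mk, h, Sym2.mem_iff]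

/-- A bigraph: a pair of finite multigraphs `G = (V, ℰ)` and `H = (W, ℰ)` sharing the same
set of (bi)edges, together with fixed total orders on the two vertex sets. -/
structure Bigraph where
  ℰ : Type
  V : Type
  W : Type
  finE : Finite ℰ
  finV : Finite V
  finW : Finite W
  τG : ℰ → Sym2 V
  τH : ℰ → Sym2 W
  ordV : LinearOrder V
  ordW : LinearOrder W

namespace Bigraph

variable (B : Bigraph)

instance : Finite B.ℰ := B.finE
instance : Finite B.V := B.finV
instance : Finite B.W := B.finW

/-- The dimension of the first graph of a bigraph. -/
def dimG : ℕ := gDim B.τG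

/-- The dimension of the second graph of a bigraph. -/
def dimH : ℕ := gDim B.τH

/-- A bigraph is pseudo-Laman if `dim G + dim H = |ℰ| + 1`. -/
def PseudoLaman : Prop := B.dimG + B.dimH = Nat.card B.ℰ + 1

/-- A bigraph has a (self-)loop if some biedge is a self-loop in `G` or in `H`. -/
def HasLoop : Prop := (∃ e, (B.τG e).IsDiag) ∨ (∃ e, (B.τH e).IsDiag)

/-- The set `P` of ordered pairs of distinct vertices of `G` joined by some edge. -/
def Pset : Set (B.V × B.V) := {p | p.1 ≠ p.2 ∧ ∃ e, B.τG e = s(p.1, p.2)}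

/-- The set `Q` of ordered pairs of distinct vertices of `H` joined by some edge. -/
def Qset : Set (B.W × B.W) := {q | q.1 ≠ q.2 ∧ ∃ e, B.τH e = s(q.1, q.2)}

/-- The smaller endpoint (w.r.t. the fixed total order) of a biedge in `G`. -/
def eFstG (e : B.ℰ) : B.V := letI := B.ordV; sMin (B.τG e)

/-- The larger endpoint of a biedge in `G`. -/
def eSndG (e : B.ℰ) : B.V := letI := B.ordV; sMax (B.τG e)

/-- The smaller endpoint of a biedge in `H`. -/
def eFstH (e : B.ℰ) : B.W := letI := B.ordW; sMin (B.τH e)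

/-- The larger endpoint of a biedge in `H`. -/
def eSndH (e : B.ℰ) : B.W := letI := B.ordW; sMax (B.τH e)

theorem eFstG_mem (e : B.ℰ) : B.eFstG e ∈ B.τG e := by
  letI := B.ordV; exact sMin_mem _

theorem eSndG_mem (e : B.ℰ) : B.eSndG e ∈ B.τG e := by
  letI := B.ordV; exact sMax_mem _

theorem eFstH_mem (e : B.ℰ) : B.eFstH e ∈ B.τH e := by
  letI := B.ordW; exact sMin_mem _

theorem eSndH_mem (e : B.ℰ) : B.eSndH e ∈ B.τH e := by
  letI := B.ordW; exact sMax_mem _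

/-- The affine solution set `Z^B(λ)` of a bigraph with distinguished biedge `ebar` and
parameters `lam`. -/
def ZSet (ebar : B.ℰ) (lam : {e : B.ℰ // e ≠ ebar} → ℂ) :
    Set ((↥B.Pset → ℂ) × (↥B.Qset → ℂ)) :=
  {xy |
    (∀ p : ↥B.Pset, (p : B.V × B.V) = (B.eFstG ebar, B.eSndG ebar) → xy.1 p = 1) ∧
    (∀ q : ↥B.Qset, (q : B.W × B.W) = (B.eFstH ebar, B.eSndH ebar) → xy.2 q = 1) ∧
    (∀ e : {e : B.ℰ // e ≠ ebar}, ∀ p : ↥B.Pset, ∀ q : ↥B.Qset,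
      (p : B.V × B.V) = (B.eFstG e.1, B.eSndG e.1) →
      (q : B.W × B.W) = (B.eFstH e.1, B.eSndH e.1) →
      xy.1 p * xy.2 q = lam e) ∧
    (∀ (n : ℕ) (u : ℕ → B.V) (w : Fin n → ↥B.Pset),
      (∀ i : Fin n, (w i : B.V × B.V) = (u i.1, u (i.1 + 1))) → u n = u 0 →
      ∑ i, xy.1 (w i) = 0) ∧
    (∀ (n : ℕ) (u : ℕ → B.W) (w : Fin n → ↥B.Qset),
      (∀ i : Fin n, (w i : B.W × B.W) = (u i.1, u (i.1 + 1))) → u n = u 0 →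
      ∑ i, xy.2 (w i) = 0)}

/-- `B` has Laman number `N` with respect to the biedge `ebar`:  there is a nonzero
polynomial `p` in the parameters such that whenever `p` does not vanish, the solution set
`Z^B(λ)` has exactly `N` elements.  By convention a bigraph containing a self-loop has
Laman number `0`. -/
def HasLamanNumber (ebar : B.ℰ) (N : ℕ) : Prop :=
  (B.HasLoop ∧ N = 0) ∨
  (¬ B.HasLoop ∧ ∃ P : MvPolynomial {e : B.ℰ // e ≠ ebar} ℂ, P ≠ 0 ∧
    ∀ lam : {e : B.ℰ // e ≠ ebar} → ℂ, MvPolynomial.eval lam P ≠ 0 →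
      (B.ZSet ebar lam).Finite ∧ Nat.card ↥(B.ZSet ebar lam) = N)

/-- The bigraph obtained by restricting the biedges to a subset `S` (both in `G` and `H`). -/
def restrict (S : Set B.ℰ) : Bigraph where
  ℰ := {e : B.ℰ // e ∈ S}
  V := B.V
  W := B.W
  finE := Subtype.finite
  finV := B.finV
  finW := B.finW
  τG := fun e => B.τG e.1
  τH := fun e => B.τH e.1
  ordV := B.ordV
  ordW := B.ordW

/-- The bigraph `^M B = (G / M, H ∖ M)`: contract the biedges of `M` in `G` and delete them
in `H`. -/
def ctrG (M : Set B.ℰ) (ord : LinearOrder (Quotient (contrSetoid B.τG M))) : Bigraph where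
  ℰ := {e : B.ℰ // e ∉ M}
  V := Quotient (contrSetoid B.τG M)
  W := B.W
  finE := Subtype.finite
  finV := Quotient.finite _
  finW := B.finW
  τG := contractEnds B.τG M
  τH := fun e => B.τH e.1
  ordV := ord
  ordW := B.ordW

/-- The bigraph `B ^ M = (G ∖ M, H / M)`: delete the biedges of `M` in `G` and contract them
in `H`. -/
def ctrH (M : Set B.ℰ) (ord : LinearOrder (Quotient (contrSetoid B.τH M))) : Bigraph where
  ℰ := {e : B.ℰ // e ∉ M}
  V := B.V
  W := Quotient (contrSetoid B.τH M)
  finE := Subtype.finite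
  finV := B.finV
  finW := Quotient.finite _
  τG := fun e => B.τG e.1
  τH := contractEnds B.τH M
  ordV := B.ordV
  ordW := ord

/-! ### Bidistances -/

/-- Symmetry of a function on `P`: `d_V(u,v) = d_V(v,u)`. -/
def BidistSymmG (dV : ↥B.Pset → ℚ) : Prop :=
  ∀ p p' : ↥B.Pset, (p' : B.V × B.V) = ((p : B.V × B.V).2, (p : B.V × B.V).1) → dV p' = dV p

/-- Symmetry of a function on `Q`: `d_W(t,w) = d_W(w,t)`. -/
def BidistSymmH (dW : ↥B.Qset → ℚ) : Prop :=
  ∀ q q' : ↥B.Qset, (q' : B.W × B.W) = ((q : B.W × B.W).2, (q : B.W × B.W).1) → dW q' = dW q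

/-- The sum condition: `d_V(u,v) + d_W(t,w) = wt(e)` for every biedge `e ≠ ebar`. -/
def BidistSum (ebar : B.ℰ) (wt : {e : B.ℰ // e ≠ ebar} → ℚ)
    (dV : ↥B.Pset → ℚ) (dW : ↥B.Qset → ℚ) : Prop :=
  ∀ e : {e : B.ℰ // e ≠ ebar}, ∀ p : ↥B.Pset, ∀ q : ↥B.Qset,
    s((p : B.V × B.V).1, (p : B.V × B.V).2) = B.τG e.1 →
    s((q : B.W × B.W).1, (q : B.W × B.W).2) = B.τH e.1 →
    dV p + dW q = wt e

/-- The base condition: `d_V(ū,v̄) = d_W(t̄,w̄) = 0` on the distinguished biedge. -/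
def BidistBase (ebar : B.ℰ) (dV : ↥B.Pset → ℚ) (dW : ↥B.Qset → ℚ) : Prop :=
  (∀ p : ↥B.Pset, s((p : B.V × B.V).1, (p : B.V × B.V).2) = B.τG ebar → dV p = 0) ∧
  (∀ q : ↥B.Qset, s((q : B.W × B.W).1, (q : B.W × B.W).2) = B.τH ebar → dW q = 0)

/-- On every closed walk in `G`, the minimum of `d_V` over the consecutive vertex pairs is
attained at least twice. -/
def BidistMinG (dV : ↥B.Pset → ℚ) : Prop :=
  ∀ (n : ℕ) (u : ℕ → B.V) (w : Fin n → ↥B.Pset),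
    (∀ i : Fin n, (w i : B.V × B.V) = (u i.1, u (i.1 + 1))) → u n = u 0 →
    ∀ i : Fin n, (∀ k, dV (w i) ≤ dV (w k)) → ∃ j, j ≠ i ∧ dV (w j) = dV (w i)

/-- On every closed walk in `H`, the minimum of `d_W` over the consecutive vertex pairs is
attained at least twice. -/
def BidistMinH (dW : ↥B.Qset → ℚ) : Prop :=
  ∀ (n : ℕ) (u : ℕ → B.W) (w : Fin n → ↥B.Qset),
    (∀ i : Fin n, (w i : B.W × B.W) = (u i.1, u (i.1 + 1))) → u n = u 0 →
    ∀ i : Fin n, (∀ k, dW (w i) ≤ dW (w k)) → ∃ j, j ≠ i ∧ dW (w j) = dW (w i)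

/-- A bidistance on `B` compatible with the weight vector `wt`. -/
def IsBidistance (ebar : B.ℰ) (wt : {e : B.ℰ // e ≠ ebar} → ℚ)
    (dV : ↥B.Pset → ℚ) (dW : ↥B.Qset → ℚ) : Prop :=
  B.BidistSymmG dV ∧ B.BidistSymmH dW ∧ B.BidistSum ebar wt dV dW ∧
  B.BidistBase ebar dV dW ∧ B.BidistMinG dV ∧ B.BidistMinH dW

/-! ### The quotient bigraph `B_d` -/

/-- The value of `d_V` on (the endpoint pair of) a biedge. -/
def gvalG (dV : ↥B.Pset → ℚ) (e : B.ℰ) : ℚ :=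
  if h : ∃ p : ↥B.Pset, s((p : B.V × B.V).1, (p : B.V × B.V).2) = B.τG e then dV h.choose
  else 0

/-- The value of `d_W` on (the endpoint pair of) a biedge. -/
def gvalH (dW : ↥B.Qset → ℚ) (e : B.ℰ) : ℚ :=
  if h : ∃ q : ↥B.Qset, s((q : B.W × B.W).1, (q : B.W × B.W).2) = B.τH e then dW h.choose
  else 0

/-- Incidences of the graph `G`: pairs of a biedge and one of its endpoints. -/
def IncG := {q : B.ℰ × B.V // q.2 ∈ B.τG q.1}

/-- Incidences of the graph `H`. -/
def IncH := {q : B.ℰ × B.W // q.2 ∈ B.τH q.1}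

instance : Finite B.IncG := by unfold IncG; infer_instance
instance : Finite B.IncH := by unfold IncH; infer_instance

/-- Two incidences `(e,v)`, `(e',v')` of `G` are identified in `B_d` if the `d_V`-levels of
`e` and `e'` agree (say equal to `α`) and `v`, `v'` are connected by edges of level `> α`. -/
def relIncG (dV : ↥B.Pset → ℚ) : B.IncG → B.IncG → Prop := fun a b =>
  B.gvalG dV a.1.1 = B.gvalG dV b.1.1 ∧
  Relation.EqvGen (fun u v => ∃ e, B.gvalG dV a.1.1 < B.gvalG dV e ∧ B.τG e = s(u, v))
    a.1.2 b.1.2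

def relIncH (dW : ↥B.Qset → ℚ) : B.IncH → B.IncH → Prop := fun a b =>
  B.gvalH dW a.1.1 = B.gvalH dW b.1.1 ∧
  Relation.EqvGen (fun u v => ∃ e, B.gvalH dW a.1.1 < B.gvalH dW e ∧ B.τH e = s(u, v))
    a.1.2 b.1.2

def incSetoidG (dV : ↥B.Pset → ℚ) : Setoid B.IncG :=
  ⟨Relation.EqvGen (B.relIncG dV), Relation.EqvGen.is_equivalence _⟩

def incSetoidH (dW : ↥B.Qset → ℚ) : Setoid B.IncH :=
  ⟨Relation.EqvGen (B.relIncH dW), Relation.EqvGen.is_equivalence _⟩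

/-- The vertices of the first graph `G_{d_V}` of the quotient bigraph `B_d`:
classes of incidences.  This realizes the disjoint union of the contractions
`G_{≥α} / G_{>α}` (with isolated vertices discarded). -/
def QVertG (dV : ↥B.Pset → ℚ) := Quotient (B.incSetoidG dV)

def QVertH (dW : ↥B.Qset → ℚ) := Quotient (B.incSetoidH dW)

/-- The incidence map of `G_{d_V}`. -/
def quotEndsG (dV : ↥B.Pset → ℚ) : B.ℰ → Sym2 (B.QVertG dV) := fun e =>
  s(Quotient.mk (B.incSetoidG dV) ⟨(e, B.eFstG e), B.eFstG_mem e⟩,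
    Quotient.mk (B.incSetoidG dV) ⟨(e, B.eSndG e), B.eSndG_mem e⟩)

/-- The incidence map of `H_{d_W}`. -/
def quotEndsH (dW : ↥B.Qset → ℚ) : B.ℰ → Sym2 (B.QVertH dW) := fun e =>
  s(Quotient.mk (B.incSetoidH dW) ⟨(e, B.eFstH e), B.eFstH_mem e⟩,
    Quotient.mk (B.incSetoidH dW) ⟨(e, B.eSndH e), B.eSndH_mem e⟩)

/-- The quotient bigraph `B_d = (G_{d_V}, H_{d_W})` of a bigraph by a bidistance `(d_V, d_W)`,
with arbitrarily fixed total orders on the new vertex sets.  It has the same biedges as `B`. -/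
def quotBigraph (dV : ↥B.Pset → ℚ) (dW : ↥B.Qset → ℚ)
    (oV : LinearOrder (B.QVertG dV)) (oW : LinearOrder (B.QVertH dW)) : Bigraph where
  ℰ := B.ℰ
  V := B.QVertG dV
  W := B.QVertH dW
  finE := B.finE
  finV := Quotient.finite _
  finW := Quotient.finite _
  τG := B.quotEndsG dV
  τH := B.quotEndsH dW
  ordV := oV
  ordW := oW

/-! ### Untangling -/

/-- `B` untangles via the biedge `ebar` with respect to the decomposition
`ℰ = E1 ⊔ E2 ⊔ {ebar}`, `V = V1 ⊔ V2`, `W = W1 ⊔ W2`:  the graph `G` is the disjoint union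
of the subgraph on `V1` with edges `E1 ∪ {ebar}` and the subgraph on `V2` with edges `E2`,
while `H` is the disjoint union of the subgraph on `W1` with edges `E1` and the subgraph on
`W2` with edges `E2 ∪ {ebar}`.  The two bigraphs into which `B` untangles are then
`B₁ = B.restrict E1` and `B₂ = B.restrict E2`. -/
def Untangles (ebar : B.ℰ) (E1 E2 : Set B.ℰ) (V1 V2 : Set B.V) (W1 W2 : Set B.W) : Prop :=
  ebar ∉ E1 ∧ ebar ∉ E2 ∧ E1 ∩ E2 = ∅ ∧ (∀ e : B.ℰ, e = ebar ∨ e ∈ E1 ∨ e ∈ E2) ∧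
  V1 ∩ V2 = ∅ ∧ V1 ∪ V2 = Set.univ ∧
  (∀ e ∈ E1, ∀ v, v ∈ B.τG e → v ∈ V1) ∧ (∀ v, v ∈ B.τG ebar → v ∈ V1) ∧
  (∀ e ∈ E2, ∀ v, v ∈ B.τG e → v ∈ V2) ∧
  W1 ∩ W2 = ∅ ∧ W1 ∪ W2 = Set.univ ∧
  (∀ e ∈ E1, ∀ x, x ∈ B.τH e → x ∈ W1) ∧
  (∀ e ∈ E2, ∀ x, x ∈ B.τH e → x ∈ W2) ∧ (∀ x, x ∈ B.τH ebar → x ∈ W2)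

/-! ### The rational map `f_B` -/

/-- The vector of coordinates of the rational map `f_B`, evaluated on representatives
`x : V → ℂ` and `y : W → ℂ`:  the `e`-th coordinate is `(x_u - x_v)(y_t - y_w)` where
`{u,v} = τ_G(e)` with `u ≺ v` and `{t,w} = τ_H(e)` with `t ≺ w`.  (For a self-loop the
corresponding factor is `0`.) -/
def fVec (x : B.V → ℂ) (y : B.W → ℂ) : B.ℰ → ℂ :=
  fun e => (x (B.eFstG e) - x (B.eSndG e)) * (y (B.eFstH e) - y (B.eSndH e))

/-- The subspace `L_G` of vectors that are constant on each connected component of `G`. -/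
def LG : Submodule ℂ (B.V → ℂ) where
  carrier := {x | ∀ u v : B.V, Relation.EqvGen (adjRel B.τG) u v → x u = x v}
  add_mem' := by
    intro a b ha hb u v h
    simp only [Pi.add_apply, ha u v h, hb u v h]
  zero_mem' := by intro u v _; rfl
  smul_mem' := by
    intro c a ha u v h
    simp only [Pi.smul_apply, ha u v h]

/-- The subspace `L_H` of vectors that are constant on each connected component of `H`. -/
def LH : Submodule ℂ (B.W → ℂ) where
  carrier := {y | ∀ u v : B.W, Relation.EqvGen (adjRel B.τH) u v → y u = y v}
  add_mem' := by
    intro a b ha hb u v h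
    simp only [Pi.add_apply, ha u v h, hb u v h]
  zero_mem' := by intro u v _; rfl
  smul_mem' := by
    intro c a ha u v h
    simp only [Pi.smul_apply, ha u v h]

/-- Dominance of the rational map `f_B`:  the image of `f_B` is not contained in any
proper algebraic subset of `ℙ(ℂ^ℰ)`, equivalently in no zero set of a nonzero homogeneous
polynomial. -/
def FDominant : Prop :=
  ¬ ∃ (n : ℕ) (P : MvPolynomial B.ℰ ℂ), P ≠ 0 ∧ P.IsHomogeneous n ∧
      ∀ (x : B.V → ℂ) (y : B.W → ℂ), MvPolynomial.eval (B.fVec x y) P = 0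

end Bigraph


/-!
If `(x, y)` represents a point of the fiber, then `(x_ū - x_v̄)(y_t̄ - y_w̄) = c ≠ 0`, so the edge
differences of `x` and of `y`, normalised to be `1` on `ē`, depend only on the projective
classes. They satisfy the biedge equations of `Z^B(λ)`, and their sums along closed walks vanish
because they telescope. Conversely, a function on the oriented edges of a graph whose sums along
closed walks vanish is the difference function of a potential, obtained by integrating it along
walks from a root of each connected component; and a potential is determined by its differences
up to `L_G`. Hence normalisation is a bijection from the fiber onto `Z^B(λ)`.
-/

section NormalizedMap

open LinearMap
open scoped LinearAlgebra.Projectivization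

variable {K M N : Type*} [Field K] [AddCommGroup M] [Module K M] [AddCommGroup N] [Module K N]
  {L : Submodule K M} {f : M →ₗ[K] N} {ψ : M →ₗ[K] K}

/-- `[x] ↦ (ψ x)⁻¹ • f x`, with the junk value `0` where `ψ x = 0`. -/
def normalizedMap (hf : L ≤ ker f) (hψ : L ≤ ker ψ) : ℙ K (M ⧸ L) → N :=
  Projectivization.lift (fun v => (L.liftQ ψ hψ v)⁻¹ • L.liftQ f hf v) <| by
    rintro ⟨-, ha⟩ ⟨b, -⟩ t rfl
    have ht : t ≠ 0 := by rintro rfl; simp at ha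
    rw [map_smul, map_smul, smul_eq_mul, mul_inv, mul_smul, smul_comm _ t, inv_smul_smul₀ ht]

theorem normalizedMap_mk (hf : L ≤ ker f) (hψ : L ≤ ker ψ) (x : M)
    (hx : (Submodule.Quotient.mk x : M ⧸ L) ≠ 0) :
    normalizedMap hf hψ (Projectivization.mk K (Submodule.Quotient.mk x) hx) = (ψ x)⁻¹ • f x :=
  rfl

theorem quotient_mk_ne_zero_of_apply_ne_zero (hψ : L ≤ ker ψ) {x : M} (hx : ψ x ≠ 0) :
    (Submodule.Quotient.mk x : M ⧸ L) ≠ 0 :=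
  fun h => hx <| hψ <| (Submodule.Quotient.mk_eq_zero L).mp h

theorem mk_eq_mk_of_normalizedMap_eq (hf : L = ker f) (hψ : L ≤ ker ψ) {x x' : M}
    (hx : (Submodule.Quotient.mk x : M ⧸ L) ≠ 0) (hx' : (Submodule.Quotient.mk x' : M ⧸ L) ≠ 0)
    (hψx : ψ x ≠ 0)
    (h : normalizedMap hf.le hψ (Projectivization.mk K _ hx) =
      normalizedMap hf.le hψ (Projectivization.mk K _ hx')) :
    Projectivization.mk K (Submodule.Quotient.mk x) hx =
      Projectivization.mk K (Submodule.Quotient.mk x') hx' := by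
  rw [normalizedMap_mk, normalizedMap_mk] at h
  have hfx : f x = (ψ x * (ψ x')⁻¹) • f x' := by
    rw [mul_smul, ← h, smul_inv_smul₀ hψx]
  rw [Projectivization.mk_eq_mk_iff']
  refine ⟨ψ x * (ψ x')⁻¹, ?_⟩
  rw [← Submodule.Quotient.mk_smul, eq_comm, Submodule.Quotient.eq, hf, mem_ker, map_sub,
    map_smul, hfx, sub_self]

end NormalizedMap

section Cochains

open SimpleGraph

variable (ends : E → Sym2 V)

/-- For a bigraph `B`, `B.Pset` is `edgePairs B.τG` by definition. -/
def edgePairs : Set (V × V) := {p | p.1 ≠ p.2 ∧ ∃ e, ends e = s(p.1, p.2)}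

def edgeGraph : SimpleGraph V where
  Adj u v := (u, v) ∈ edgePairs ends
  symm := ⟨fun _ _ ⟨hne, e, he⟩ => ⟨hne.symm, e, he.trans Sym2.eq_swap⟩⟩
  loopless := ⟨fun _ h => h.1 rfl⟩

def WalkSumsVanish {A : Type*} [AddCommGroup A] (z : edgePairs ends → A) : Prop :=
  ∀ (n : ℕ) (u : ℕ → V) (w : Fin n → edgePairs ends),
    (∀ i : Fin n, (w i : V × V) = (u i.1, u (i.1 + 1))) → u n = u 0 → ∑ i, z (w i) = 0

def coboundary (R : Type*) [CommRing R] : (V → R) →ₗ[R] (edgePairs ends → R) where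
  toFun x p := x (p : V × V).1 - x (p : V × V).2
  map_add' _ _ := by ext; simp only [Pi.add_apply]; abel
  map_smul' _ _ := by ext; simp only [Pi.smul_apply, smul_eq_mul, RingHom.id_apply]; ring

variable {ends}

@[simp]
theorem coboundary_apply {R : Type*} [CommRing R] (x : V → R) (p : edgePairs ends) :
    coboundary ends R x p = x (p : V × V).1 - x (p : V × V).2 :=
  rfl

theorem walkSumsVanish_coboundary {R : Type*} [CommRing R] (x : V → R) :
    WalkSumsVanish ends (coboundary ends R x) := by
  intro n u w hw hu
  simp only [coboundary_apply, hw]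
  rw [Fin.sum_univ_eq_sum_range (fun i => x (u i) - x (u (i + 1))), Finset.sum_range_sub',
    hu, sub_self]

theorem mem_ker_coboundary_iff {R : Type*} [CommRing R] {x : V → R} :
    x ∈ LinearMap.ker (coboundary ends R) ↔
      ∀ u v, Relation.EqvGen (adjRel ends) u v → x u = x v := by
  refine ⟨fun hx u v huv => ?_, fun hx => funext fun p => sub_eq_zero.mpr <| hx _ _ <|
    Relation.EqvGen.rel _ _ p.2.2⟩
  induction huv with
  | rel u v huv =>
    by_cases huv' : u = v
    · rw [huv']
    · exact sub_eq_zero.mp (congrFun hx ⟨(u, v), huv', huv⟩)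
  | refl => rfl
  | symm _ _ _ ih => exact ih.symm
  | trans _ _ _ _ _ ih₁ ih₂ => exact ih₁.trans ih₂

theorem ker_coboundary_le_ker_sub_proj {R : Type*} [CommRing R] {e : E} {a b : V}
    (hab : ends e = s(a, b)) :
    LinearMap.ker (coboundary ends R) ≤
      LinearMap.ker ((LinearMap.proj a : (V → R) →ₗ[R] R) - LinearMap.proj b) :=
  fun _ hx => sub_eq_zero.mpr <| mem_ker_coboundary_iff.mp hx _ _ <| .rel _ _ ⟨e, hab⟩

variable {A : Type*} [AddCommGroup A] {z : edgePairs ends → A}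

def walkSum (z : edgePairs ends → A) {u v : V} (W : (edgeGraph ends).Walk u v) : A :=
  (W.darts.map fun d => z ⟨d.toProd, d.adj⟩).sum

theorem walkSum_eq_zero (hz : WalkSumsVanish ends z) {u : V} (W : (edgeGraph ends).Walk u u) :
    walkSum z W = 0 := by
  rw [walkSum, ← Fin.sum_univ_fun_getElem]
  refine hz _ W.getVert _ (fun i => ?_) (by rw [W.length_darts, W.getVert_length, W.getVert_zero])
  rw [W.darts_getElem_eq_getVert]

theorem walkSum_append {u v w : V} (W : (edgeGraph ends).Walk u v)
    (W' : (edgeGraph ends).Walk v w) : walkSum z (W.append W') = walkSum z W + walkSum z W' := by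
  simp [walkSum, Walk.darts_append]

theorem walkSum_reverse (hz : WalkSumsVanish ends z) {u v : V} (W : (edgeGraph ends).Walk u v) :
    walkSum z W.reverse = -walkSum z W := by
  have hsymm : ∀ d : (edgeGraph ends).Dart, z ⟨d.toProd.swap, d.symm.adj⟩ = -z ⟨d.toProd, d.adj⟩ :=
    fun d => eq_neg_of_add_eq_zero_right <| by
      have h := walkSum_eq_zero hz (.cons d.adj (.cons d.adj.symm .nil))
      simp only [walkSum, Walk.darts_cons, Walk.darts_nil, List.map_cons, List.map_nil,
        List.sum_cons, List.sum_nil, add_zero] at h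
      exact h
  simp [walkSum, Walk.darts_reverse, Function.comp_def, hsymm, List.sum_neg]

theorem walkSum_eq_walkSum (hz : WalkSumsVanish ends z) {u v : V}
    (W W' : (edgeGraph ends).Walk u v) : walkSum z W = walkSum z W' := by
  have h := walkSum_eq_zero hz (W.append W'.reverse)
  rwa [walkSum_append, walkSum_reverse hz, ← sub_eq_add_neg, sub_eq_zero] at h

theorem exists_potential (hz : WalkSumsVanish ends z) :
    ∃ x : V → A, ∀ p : edgePairs ends, x (p : V × V).1 - x (p : V × V).2 = z p := by
  let G := edgeGraph ends
  have hroot : ∀ u, G.Reachable (G.connectedComponentMk u).out u :=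
    fun u => ConnectedComponent.exact (Quot.out_eq _)
  refine ⟨fun u => -walkSum z (hroot u).some, fun p => ?_⟩
  have hp : G.Adj p.1.1 p.1.2 := p.2
  have hroot_eq : (G.connectedComponentMk p.1.1).out = (G.connectedComponentMk p.1.2).out := by
    rw [ConnectedComponent.eq.mpr hp.reachable]
  have h := walkSum_eq_walkSum hz (((hroot p.1.1).some.concat hp).copy hroot_eq rfl)
    (hroot p.1.2).some
  simp only [walkSum, Walk.darts_copy, Walk.darts_concat, List.concat_eq_append, List.map_append,
    List.sum_append, List.map_cons, List.map_nil, List.sum_cons, List.sum_nil, add_zero] at h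
  simp only [walkSum, ← h]
  abel

end Cochains

theorem sMin_sMax_eq [LinearOrder V] (s : Sym2 V) : s(sMin s, sMax s) = s := by
  induction s using Sym2.ind with
  | _ x y =>
    rcases le_total x y with h | h
    · simp [sMin, sMax, h]
    · simp [sMin, sMax, h, Sym2.eq_swap]

namespace Bigraph

open scoped LinearAlgebra.Projectivization

variable (B : Bigraph)

theorem τG_eq (e : B.ℰ) : B.τG e = s(B.eFstG e, B.eSndG e) :=
  (@sMin_sMax_eq _ B.ordV _).symm

theorem τH_eq (e : B.ℰ) : B.τH e = s(B.eFstH e, B.eSndH e) :=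
  (@sMin_sMax_eq _ B.ordW _).symm

theorem LG_eq_ker : B.LG = LinearMap.ker (coboundary B.τG ℂ) := by
  ext; exact mem_ker_coboundary_iff.symm

theorem LH_eq_ker : B.LH = LinearMap.ker (coboundary B.τH ℂ) := by
  ext; exact mem_ker_coboundary_iff.symm

theorem mk_mem_Pset (hloop : ¬ B.HasLoop) (e : B.ℰ) : (B.eFstG e, B.eSndG e) ∈ B.Pset :=
  ⟨fun h => hloop (.inl ⟨e, B.τG_eq e ▸ Sym2.mk_isDiag_iff.mpr h⟩), e, B.τG_eq e⟩

theorem mk_mem_Qset (hloop : ¬ B.HasLoop) (e : B.ℰ) : (B.eFstH e, B.eSndH e) ∈ B.Qset :=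
  ⟨fun h => hloop (.inr ⟨e, B.τH_eq e ▸ Sym2.mk_isDiag_iff.mpr h⟩), e, B.τH_eq e⟩

variable (ebar : B.ℰ) (lam : {e : B.ℰ // e ≠ ebar} → ℂ)

theorem LG_le_ker_sub_proj :
    B.LG ≤ LinearMap.ker
      ((LinearMap.proj (B.eFstG ebar) : (B.V → ℂ) →ₗ[ℂ] ℂ) - LinearMap.proj (B.eSndG ebar)) :=
  B.LG_eq_ker.le.trans (ker_coboundary_le_ker_sub_proj (B.τG_eq ebar))

theorem LH_le_ker_sub_proj :
    B.LH ≤ LinearMap.ker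
      ((LinearMap.proj (B.eFstH ebar) : (B.W → ℂ) →ₗ[ℂ] ℂ) - LinearMap.proj (B.eSndH ebar)) :=
  B.LH_eq_ker.le.trans (ker_coboundary_le_ker_sub_proj (B.τH_eq ebar))

def chartG : ℙ ℂ ((B.V → ℂ) ⧸ B.LG) → (B.Pset → ℂ) :=
  normalizedMap B.LG_eq_ker.le (B.LG_le_ker_sub_proj ebar)

def chartH : ℙ ℂ ((B.W → ℂ) ⧸ B.LH) → (B.Qset → ℂ) :=
  normalizedMap B.LH_eq_ker.le (B.LH_le_ker_sub_proj ebar)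

theorem chartG_mk_apply (x : B.V → ℂ)
    (hx : (Submodule.Quotient.mk x : (B.V → ℂ) ⧸ B.LG) ≠ 0) (p : B.Pset) :
    B.chartG ebar (Projectivization.mk ℂ _ hx) p =
      (x (B.eFstG ebar) - x (B.eSndG ebar))⁻¹ * (x (p : B.V × B.V).1 - x (p : B.V × B.V).2) :=
  rfl

theorem chartH_mk_apply (y : B.W → ℂ)
    (hy : (Submodule.Quotient.mk y : (B.W → ℂ) ⧸ B.LH) ≠ 0) (q : B.Qset) :
    B.chartH ebar (Projectivization.mk ℂ _ hy) q =
      (y (B.eFstH ebar) - y (B.eSndH ebar))⁻¹ * (y (q : B.W × B.W).1 - y (q : B.W × B.W).2) :=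
  rfl

def chart : ℙ ℂ ((B.V → ℂ) ⧸ B.LG) × ℙ ℂ ((B.W → ℂ) ⧸ B.LH) → (B.Pset → ℂ) × (B.Qset → ℂ) :=
  Prod.map (B.chartG ebar) (B.chartH ebar)

def fiber : Set (ℙ ℂ ((B.V → ℂ) ⧸ B.LG) × ℙ ℂ ((B.W → ℂ) ⧸ B.LH)) :=
  {XY | ∃ (x : B.V → ℂ) (y : B.W → ℂ)
      (hx : (Submodule.Quotient.mk x : (B.V → ℂ) ⧸ B.LG) ≠ 0)
      (hy : (Submodule.Quotient.mk y : (B.W → ℂ) ⧸ B.LH) ≠ 0),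
      XY.1 = Projectivization.mk ℂ (Submodule.Quotient.mk x) hx ∧
      XY.2 = Projectivization.mk ℂ (Submodule.Quotient.mk y) hy ∧
      B.fVec x y ≠ 0 ∧
      ∃ c : ℂ, c ≠ 0 ∧ ∀ e : B.ℰ,
        B.fVec x y e = c * (if h : e = ebar then 1 else lam ⟨e, h⟩)}

variable {B ebar lam} in
theorem fVec_ebar_of_forall_eq {x : B.V → ℂ} {y : B.W → ℂ} {c : ℂ}
    (hf : ∀ e : B.ℰ, B.fVec x y e = c * (if h : e = ebar then 1 else lam ⟨e, h⟩)) :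
    (x (B.eFstG ebar) - x (B.eSndG ebar)) * (y (B.eFstH ebar) - y (B.eSndH ebar)) = c := by
  simpa [fVec] using hf ebar

theorem mapsTo_chart_fiber : Set.MapsTo (B.chart ebar) (B.fiber ebar lam) (B.ZSet ebar lam) := by
  rintro XY ⟨x, y, hx, hy, hX, hY, -, c, hc, hf⟩
  have hxy := fVec_ebar_of_forall_eq hf
  have hα := left_ne_zero_of_mul (hxy ▸ hc)
  have hβ := right_ne_zero_of_mul (hxy ▸ hc)
  have hX' : (B.chart ebar XY).1 = B.chartG ebar (Projectivization.mk ℂ _ hx) := by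
    rw [chart, Prod.map_fst, hX]
  have hY' : (B.chart ebar XY).2 = B.chartH ebar (Projectivization.mk ℂ _ hy) := by
    rw [chart, Prod.map_snd, hY]
  refine ⟨fun p hp => ?_, fun q hq => ?_, fun e p q hp hq => ?_, ?_, ?_⟩
  · rw [hX', chartG_mk_apply, hp, inv_mul_cancel₀ hα]
  · rw [hY', chartH_mk_apply, hq, inv_mul_cancel₀ hβ]
  · have he := hf e
    simp only [e.2, dite_false, fVec] at he
    rw [hX', hY', chartG_mk_apply, chartH_mk_apply, hp, hq, mul_mul_mul_comm, he, ← mul_inv, hxy,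
      inv_mul_cancel_left₀ hc]
  · intro n u w hw hu
    simp only [hX', chartG_mk_apply, ← Finset.mul_sum]
    exact mul_eq_zero_of_right _ (walkSumsVanish_coboundary x n u w hw hu)
  · intro n u w hw hu
    simp only [hY', chartH_mk_apply, ← Finset.mul_sum]
    exact mul_eq_zero_of_right _ (walkSumsVanish_coboundary y n u w hw hu)

theorem injOn_chart_fiber : Set.InjOn (B.chart ebar) (B.fiber ebar lam) := by
  rintro XY ⟨x, y, hx, hy, hX, hY, -, c, hc, hf⟩ XY' ⟨x', y', hx', hy', hX', hY', -⟩ h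
  have hxy := fVec_ebar_of_forall_eq hf
  have hG : B.chartG ebar XY.1 = B.chartG ebar XY'.1 := congrArg Prod.fst h
  have hH : B.chartH ebar XY.2 = B.chartH ebar XY'.2 := congrArg Prod.snd h
  refine Prod.ext ?_ ?_
  · rw [hX, hX'] at hG ⊢
    exact mk_eq_mk_of_normalizedMap_eq B.LG_eq_ker _ hx hx' (left_ne_zero_of_mul (hxy ▸ hc)) hG
  · rw [hY, hY'] at hH ⊢
    exact mk_eq_mk_of_normalizedMap_eq B.LH_eq_ker _ hy hy' (right_ne_zero_of_mul (hxy ▸ hc)) hH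

theorem surjOn_chart_fiber (hloop : ¬ B.HasLoop) :
    Set.SurjOn (B.chart ebar) (B.fiber ebar lam) (B.ZSet ebar lam) := by
  rintro z ⟨hzx, hzy, hzxy, hwx, hwy⟩
  obtain ⟨x, hx⟩ := exists_potential hwx
  obtain ⟨y, hy⟩ := exists_potential hwy
  have hP := B.mk_mem_Pset hloop
  have hQ := B.mk_mem_Qset hloop
  have hα : x (B.eFstG ebar) - x (B.eSndG ebar) = 1 := (hx ⟨_, hP ebar⟩).trans (hzx _ rfl)
  have hβ : y (B.eFstH ebar) - y (B.eSndH ebar) = 1 := (hy ⟨_, hQ ebar⟩).trans (hzy _ rfl)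
  have hf : ∀ e, B.fVec x y e = 1 * (if h : e = ebar then 1 else lam ⟨e, h⟩) := by
    intro e
    rw [one_mul, fVec]
    split_ifs with he
    · rw [he, hα, hβ, one_mul]
    · rw [hx ⟨_, hP e⟩, hy ⟨_, hQ e⟩]
      exact hzxy ⟨e, he⟩ _ _ rfl rfl
  have hx0 := quotient_mk_ne_zero_of_apply_ne_zero (B.LG_le_ker_sub_proj ebar)
    (show x (B.eFstG ebar) - x (B.eSndG ebar) ≠ 0 from hα ▸ one_ne_zero)
  have hy0 := quotient_mk_ne_zero_of_apply_ne_zero (B.LH_le_ker_sub_proj ebar)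
    (show y (B.eFstH ebar) - y (B.eSndH ebar) ≠ 0 from hβ ▸ one_ne_zero)
  refine ⟨(Projectivization.mk ℂ _ hx0, Projectivization.mk ℂ _ hy0),
    ⟨x, y, hx0, hy0, rfl, rfl, fun h => ?_, 1, one_ne_zero, hf⟩, ?_⟩
  · simpa [h] using hf ebar
  · refine Prod.ext (funext fun p => ?_) (funext fun q => ?_)
    · exact (B.chartG_mk_apply ebar x hx0 p).trans (by rw [hα, inv_one, one_mul]; exact hx p)
    · exact (B.chartH_mk_apply ebar y hy0 q).trans (by rw [hβ, inv_one, one_mul]; exact hy q)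

theorem bijOn_chart_fiber (hloop : ¬ B.HasLoop) :
    Set.BijOn (B.chart ebar) (B.fiber ebar lam) (B.ZSet ebar lam) :=
  ⟨B.mapsTo_chart_fiber ebar lam, B.injOn_chart_fiber ebar lam, B.surjOn_chart_fiber ebar lam hloop⟩

end Bigraph

/-- The fiber of `f_B` over the point `p ∈ ℙ(ℂ^ℰ)` with `p_ē = 1` and
`p_e = λ_e` otherwise is in bijection with the affine solution set `Z^B(λ)`. -/
theorem statement7 (B : Bigraph) (hloop : ¬ B.HasLoop) (ebar : B.ℰ)
    (lam : {e : B.ℰ // e ≠ ebar} → ℂ) :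
    Nonempty
      (↥{XY : Projectivization ℂ ((B.V → ℂ) ⧸ B.LG) ×
            Projectivization ℂ ((B.W → ℂ) ⧸ B.LH) |
          ∃ (x : B.V → ℂ) (y : B.W → ℂ)
            (hx : (Submodule.Quotient.mk x : (B.V → ℂ) ⧸ B.LG) ≠ 0)
            (hy : (Submodule.Quotient.mk y : (B.W → ℂ) ⧸ B.LH) ≠ 0),
            XY.1 = Projectivization.mk ℂ (Submodule.Quotient.mk x) hx ∧
            XY.2 = Projectivization.mk ℂ (Submodule.Quotient.mk y) hy ∧
            B.fVec x y ≠ 0 ∧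
            ∃ c : ℂ, c ≠ 0 ∧ ∀ e : B.ℰ,
              B.fVec x y e = c * (if h : e = ebar then 1 else lam ⟨e, h⟩)} ≃
        ↥(B.ZSet ebar lam)) :=
  ⟨(B.bijOn_chart_fiber ebar lam hloop).equiv _⟩

end LamanPaper
end
end

section
/- Suppose a pseudo-Laman bigraph B=(G,H) with biedge set ℰ without self-loops untangles via a biedge ē∈ℰ into bigraphs B₁ and B₂, and suppose ē is a bridge in G. Then B₁ is not pseudo-Laman or B₂ is not pseudo-Laman. -/
set_option maxHeartbeats 1000000

noncomputable section
open Classical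

namespace LamanPaper

variable {V E : Type}

/-
With `c(S)` the number of connected components of the spanning subgraph with edge set `S`,
two spanning subgraphs supported on disjoint vertex sets satisfy `c(S ∪ T) + |V| ≤ c(S) + c(T)`,
so dimension is superadditive on them.  In `G` the bridge `ē` gives
`dim G₁ + dim G₂ ≤ dim (G ∖ ē) < dim G`, and in `H` the pieces `E1` and `E2 ∪ {ē}` give
`dim H₁ + dim H₂ ≤ dim H`.  If both `B₁` and `B₂` were pseudo-Laman, adding their equations
would give `dim G + dim H > |E1| + |E2| + 2 = |ℰ| + 1`.
-/

section Components

variable {α : Type}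

theorem card_quot_le_card [Finite α] (r : α → α → Prop) : Nat.card (Quot r) ≤ Nat.card α :=
  Nat.card_le_card_of_surjective _ Quot.mk_surjective

theorem card_quot_le_of_le [Finite α] {r r' : α → α → Prop} (h : r ≤ r') :
    Nat.card (Quot r') ≤ Nat.card (Quot r) :=
  Nat.card_le_card_of_surjective (Quot.map id h) (Quot.ind fun a => ⟨Quot.mk _ a, rfl⟩)

/-- A class of `r` inside `X` is sent to the class of `r ⊔ s` it lies in, a class outside `X` to
its unique element; symmetrically for `s`.  Every class of `r ⊔ s` and every point is hit. -/
theorem card_quot_sup_add_card_le [Finite α] {r s : α → α → Prop} {X : Set α}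
    (hr : ∀ u v, r u v → u ∈ X ∧ v ∈ X) (hs : ∀ u v, s u v → u ∉ X ∧ v ∉ X) :
    Nat.card (Quot (r ⊔ s)) + Nat.card α ≤ Nat.card (Quot r) + Nat.card (Quot s) := by
  let toSup : α → Quot (r ⊔ s) ⊕ α := fun u => .inl (Quot.mk _ u)
  let f : Quot r ⊕ Quot s → Quot (r ⊔ s) ⊕ α := Sum.elim
    (Quot.lift (fun u => if u ∈ X then toSup u else .inr u) fun u v h => by
      simp only [(hr u v h).1, (hr u v h).2, if_true]
      exact congrArg Sum.inl (Quot.sound (Or.inl h)))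
    (Quot.lift (fun u => if u ∈ X then .inr u else toSup u) fun u v h => by
      simp only [(hs u v h).1, (hs u v h).2, if_false]
      exact congrArg Sum.inl (Quot.sound (Or.inr h)))
  have hf : Function.Surjective f := by
    rintro (q | u)
    · obtain ⟨u, rfl⟩ := Quot.mk_surjective q
      by_cases hu : u ∈ X
      · exact ⟨.inl (Quot.mk _ u), by simp [f, toSup, hu]⟩
      · exact ⟨.inr (Quot.mk _ u), by simp [f, toSup, hu]⟩
    · by_cases hu : u ∈ X
      · exact ⟨.inr (Quot.mk _ u), by simp [f, hu]⟩
      · exact ⟨.inl (Quot.mk _ u), by simp [f, hu]⟩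
  simpa only [Nat.card_sum] using Nat.card_le_card_of_surjective f hf

end Components

def adjRelOn (ends : E → Sym2 V) (S : Set E) : V → V → Prop :=
  fun u v => ∃ e ∈ S, ends e = s(u, v)

theorem adjRelOn_union (ends : E → Sym2 V) (S T : Set E) :
    adjRelOn ends (S ∪ T) = adjRelOn ends S ⊔ adjRelOn ends T := by
  ext u v
  simp only [adjRelOn, Set.mem_union, or_and_right, exists_or]
  rfl

theorem adjRelOn_mono (ends : E → Sym2 V) {S T : Set E} (h : S ⊆ T) :
    adjRelOn ends S ≤ adjRelOn ends T :=
  fun _ _ ⟨e, he, huv⟩ => ⟨e, h he, huv⟩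

theorem adjRelOn_mem {ends : E → Sym2 V} {S : Set E} {X : Set V}
    (hX : ∀ e ∈ S, ∀ v, v ∈ ends e → v ∈ X) {u v : V} (h : adjRelOn ends S u v) :
    u ∈ X ∧ v ∈ X := by
  obtain ⟨e, he, huv⟩ := h
  exact ⟨hX e he u (huv ▸ Sym2.mem_mk_left u v), hX e he v (huv ▸ Sym2.mem_mk_right u v)⟩

theorem numCC_eq_card_quot (ends : E → Sym2 V) : numCC ends = Nat.card (Quot (adjRel ends)) :=
  Nat.card_congr
    { toFun := Quot.lift (Quot.mk _) fun _ _ => Quot.eqvGen_sound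
      invFun := Quot.lift (Quot.mk _) fun _ _ h => Quot.sound (Relation.EqvGen.rel _ _ h)
      left_inv := by rintro ⟨⟩; rfl
      right_inv := by rintro ⟨⟩; rfl }

theorem adjRel_restrictEnds (ends : E → Sym2 V) (S : Set E) :
    adjRel (restrictEnds ends S) = adjRelOn ends S := by
  ext u v
  simp [adjRel, adjRelOn, restrictEnds]

theorem adjRel_deleteEnds (ends : E → Sym2 V) (S : Set E) :
    adjRel (deleteEnds ends S) = adjRelOn ends Sᶜ := by
  ext u v
  simp [adjRel, adjRelOn, deleteEnds]

theorem gDim_eq_restrictEnds_univ (ends : E → Sym2 V) :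
    gDim ends = gDim (restrictEnds ends Set.univ) := by
  have : adjRel ends = adjRelOn ends Set.univ := by
    ext u v
    simp [adjRel, adjRelOn]
  rw [gDim, gDim, numCC_eq_card_quot, numCC_eq_card_quot, this, adjRel_restrictEnds]

section Dimension

variable [Finite V] (ends : E → Sym2 V)

theorem gDim_restrictEnds_mono {S T : Set E} (h : S ⊆ T) :
    gDim (restrictEnds ends S) ≤ gDim (restrictEnds ends T) := by
  unfold gDim
  rw [numCC_eq_card_quot, numCC_eq_card_quot, adjRel_restrictEnds, adjRel_restrictEnds]
  exact Nat.sub_le_sub_left (card_quot_le_of_le (adjRelOn_mono ends h)) _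

theorem gDim_restrictEnds_add_le_union {S T : Set E} {X : Set V}
    (hS : ∀ e ∈ S, ∀ v, v ∈ ends e → v ∈ X) (hT : ∀ e ∈ T, ∀ v, v ∈ ends e → v ∉ X) :
    gDim (restrictEnds ends S) + gDim (restrictEnds ends T) ≤
      gDim (restrictEnds ends (S ∪ T)) := by
  unfold gDim
  rw [numCC_eq_card_quot, numCC_eq_card_quot, numCC_eq_card_quot, adjRel_restrictEnds,
    adjRel_restrictEnds, adjRel_restrictEnds, adjRelOn_union]
  have := card_quot_sup_add_card_le (r := adjRelOn ends S) (s := adjRelOn ends T)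
    (fun _ _ => adjRelOn_mem hS) (fun _ _ => adjRelOn_mem hT)
  have := card_quot_le_card (adjRelOn ends S)
  have := card_quot_le_card (adjRelOn ends T)
  omega

theorem IsBridge.gDim_restrictEnds_compl_lt {e : E} (h : IsBridge ends e) :
    gDim (restrictEnds ends {e}ᶜ) < gDim ends := by
  unfold IsBridge at h
  have := card_quot_le_card (adjRelOn ends {e}ᶜ)
  rw [numCC_eq_card_quot (deleteEnds ends {e}), adjRel_deleteEnds] at h
  rw [gDim, gDim, numCC_eq_card_quot (restrictEnds ends {e}ᶜ), adjRel_restrictEnds]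
  omega

end Dimension

namespace Bigraph

variable {B : Bigraph} {ebar : B.ℰ} {E1 E2 : Set B.ℰ} {V1 V2 : Set B.V} {W1 W2 : Set B.W}

theorem Untangles.card_ℰ (hun : B.Untangles ebar E1 E2 V1 V2 W1 W2) :
    Nat.card B.ℰ = Nat.card (B.restrict E1).ℰ + Nat.card (B.restrict E2).ℰ + 1 := by
  show Nat.card B.ℰ = Nat.card E1 + Nat.card E2 + 1
  obtain ⟨he1, he2, hE12, hcov, -⟩ := hun
  have huniv : (Set.univ : Set B.ℰ) = E1 ∪ E2 ∪ {ebar} := by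
    ext e
    rcases hcov e with h | h | h <;> simp [h]
  rw [Nat.card_coe_set_eq, Nat.card_coe_set_eq, ← Set.ncard_univ, huniv,
    Set.ncard_union_eq (by simp [he1, he2]), Set.ncard_union_eq
      (Set.disjoint_iff_inter_eq_empty.mpr hE12), Set.ncard_singleton]

theorem Untangles.dimG_add_dimG_lt (hun : B.Untangles ebar E1 E2 V1 V2 W1 W2)
    (hbG : IsBridge B.τG ebar) :
    (B.restrict E1).dimG + (B.restrict E2).dimG < B.dimG := by
  obtain ⟨he1, he2, -, hcov, hV12, -, hGE1, -, hGE2, -⟩ := hun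
  have hdel : ({ebar}ᶜ : Set B.ℰ) = E1 ∪ E2 := by
    ext e
    rcases hcov e with rfl | h | h
    · simp [he1, he2]
    · simp [h, ne_of_mem_of_not_mem h he1]
    · simp [h, ne_of_mem_of_not_mem h he2]
  calc gDim (restrictEnds B.τG E1) + gDim (restrictEnds B.τG E2)
      ≤ gDim (restrictEnds B.τG {ebar}ᶜ) := hdel ▸ gDim_restrictEnds_add_le_union B.τG hGE1
        fun e he v hv hv1 => (Set.eq_empty_iff_forall_notMem.mp hV12) v ⟨hv1, hGE2 e he v hv⟩
    _ < gDim B.τG := hbG.gDim_restrictEnds_compl_lt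

theorem Untangles.dimH_add_dimH_le (hun : B.Untangles ebar E1 E2 V1 V2 W1 W2) :
    (B.restrict E1).dimH + (B.restrict E2).dimH ≤ B.dimH := by
  obtain ⟨-, -, -, hcov, -, -, -, -, -, hW12, -, hHE1, hHE2, hHebar⟩ := hun
  have huniv : (Set.univ : Set B.ℰ) = E1 ∪ (E2 ∪ {ebar}) := by
    ext e
    rcases hcov e with h | h | h <;> simp [h]
  have hW2 : ∀ e ∈ E2 ∪ {ebar}, ∀ x, x ∈ B.τH e → x ∉ W1 := by
    rintro e (he | rfl) x hx hx1 <;>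
      refine (Set.eq_empty_iff_forall_notMem.mp hW12) x ⟨hx1, ?_⟩
    exacts [hHE2 e he x hx, hHebar x hx]
  calc gDim (restrictEnds B.τH E1) + gDim (restrictEnds B.τH E2)
      ≤ gDim (restrictEnds B.τH E1) + gDim (restrictEnds B.τH (E2 ∪ {ebar})) :=
        Nat.add_le_add_left (gDim_restrictEnds_mono B.τH Set.subset_union_left) _
    _ ≤ gDim (restrictEnds B.τH Set.univ) := huniv ▸ gDim_restrictEnds_add_le_union B.τH hHE1 hW2
    _ = gDim B.τH := (gDim_eq_restrictEnds_univ B.τH).symm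

end Bigraph

theorem statement12_general (B : Bigraph) (hpl : B.PseudoLaman)
    (ebar : B.ℰ) (E1 E2 : Set B.ℰ) (V1 V2 : Set B.V) (W1 W2 : Set B.W)
    (hun : B.Untangles ebar E1 E2 V1 V2 W1 W2)
    (hbG : IsBridge B.τG ebar) :
    ¬ (B.restrict E1).PseudoLaman ∨ ¬ (B.restrict E2).PseudoLaman := by
  by_contra! ⟨hpl1, hpl2⟩
  have hG := hun.dimG_add_dimG_lt hbG
  have hH := hun.dimH_add_dimH_le
  have hE := hun.card_ℰ
  unfold Bigraph.PseudoLaman at hpl hpl1 hpl2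
  omega

/-- If a pseudo-Laman bigraph `B` untangles via `ē` into `B₁` and `B₂`
and `ē` is a bridge in `G`, then `B₁` or `B₂` is not pseudo-Laman. -/
theorem statement12 (B : Bigraph) (hloop : ¬ B.HasLoop) (hpl : B.PseudoLaman)
    (ebar : B.ℰ) (E1 E2 : Set B.ℰ) (V1 V2 : Set B.V) (W1 W2 : Set B.W)
    (hun : B.Untangles ebar E1 E2 V1 V2 W1 W2)
    (hbG : IsBridge B.τG ebar) :
    ¬ (B.restrict E1).PseudoLaman ∨ ¬ (B.restrict E2).PseudoLaman :=
  statement12_general B hpl ebar E1 E2 V1 V2 W1 W2 hun hbG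

end LamanPaper
end
end
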